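/- arXiv:2305.14512 — 8 statements merged into one kernel-verified Lean document; each statement's English description precedes it below -/
import Mathlib

section
/- Let N ≥ 1 and let A ∈ ℝ^{(N+1)×(N+1)} be an adjacency matrix with nonnegative entries, zero diagonal, and zero first row (A(0,j) = 0 for all j), where index 0 represents the leader and an edge from node j to node i exists exactly when A(i,j) > 0. Let D ∈ ℝ^{(N+1)×(N+1)} be the diagonal in-degree matrix with D(i,i) = Σ_j A(i,j), let L = D − A be the Laplacian, and let H ∈ ℝ^{N×N} be the leader-follower matrix obtained from L by deleting the row and the column of index 0. If the leader is a root of the graph, i.e., for every node i ≠ 0 there exists k ≥ 1 with (A^k)(i,0) > 0, then every eigenvalue λ ∈ ℂ of H satisfies Re λ > 0. -/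
/-!
Extend an eigenvector `v` of `H` by `0` at the leader to `w`; then `L w = μ w` at every follower.
If `re μ ≤ 0`, at a follower where `‖w‖` is maximal the eigen-equation
`∑ q, A p q (w p - w q) = μ w p` forces `w q = w p` along every edge `p → q`, so `w` is constant
on everything reachable from `p`. The leader is reachable, and `w` vanishes there.
-/

open Matrix

namespace Matrix

variable {n R : Type*} [Fintype n]

theorem mem_of_mem_of_pow_apply_pos [Ring R] [LinearOrder R] [IsStrictOrderedRing R]
    [DecidableEq n] {A : Matrix n n R} (hA : ∀ i j, 0 ≤ A i j) {S : Set n}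
    (hS : ∀ i j, i ∈ S → 0 < A i j → j ∈ S) {k : ℕ} {i j : n} (hi : i ∈ S)
    (hij : 0 < (A ^ k) i j) : j ∈ S := by
  let := toQuiver A
  obtain ⟨p, -⟩ := (pow_apply_pos_iff_nonempty_path hA k i j).mp hij
  clear hij
  induction p with
  | nil => exact hi
  | cons _ e ih => exact hS _ _ ih e.down

theorem diagonal_sum_sub_mulVec_apply [CommRing R] [DecidableEq n] (A : Matrix n n R)
    (w : n → R) (i : n) :
    (((diagonal fun i => ∑ j, A i j) - A) *ᵥ w) i = ∑ j, A i j * (w i - w j) := by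
  rw [sub_mulVec, Pi.sub_apply, mulVec_diagonal, Finset.sum_mul]
  simp [mulVec, dotProduct, mul_sub]

theorem submatrix_succ_mulVec_apply [NonUnitalNonAssocSemiring R] {m : ℕ}
    (M : Matrix (Fin (m + 1)) (Fin (m + 1)) R) (v : Fin m → R) (i : Fin m) :
    (M.submatrix Fin.succ Fin.succ *ᵥ v) i = (M *ᵥ Fin.cons 0 v) i.succ := by
  simp [mulVec, dotProduct, Fin.sum_univ_succ]

end Matrix

section LaplacianEigenvector

variable {n : Type*} [Fintype n] {A : Matrix n n ℝ} {w : n → ℂ} {μ : ℂ}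

/-- At a node `p` where `‖w‖` is maximal, dividing the eigen-equation by `w p` and taking real
parts gives `∑ q, A p q * (1 - re (w q / w p)) = re μ ≤ 0` with nonnegative summands. -/
theorem eq_of_laplacian_eigen_of_forall_norm_le (hA : ∀ i j, 0 ≤ A i j) (hμ : μ.re ≤ 0) {p : n}
    (hmax : ∀ q, ‖w q‖ ≤ ‖w p‖) (hp : w p ≠ 0)
    (heig : ∑ q, (A p q : ℂ) * (w p - w q) = μ * w p) {q : n} (hq : 0 < A p q) :
    w q = w p := by
  set z : n → ℂ := fun q => w q / w p
  have hz_norm : ∀ q, ‖z q‖ ≤ 1 := fun q => by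
    rw [norm_div, div_le_one (norm_pos_iff.mpr hp)]
    exact hmax q
  have hz_re : ∀ q, (z q).re ≤ 1 := fun q => (Complex.re_le_norm _).trans (hz_norm q)
  have hsum : ∑ q, A p q * (1 - (z q).re) = μ.re := by
    have : ∑ q, (A p q : ℂ) * (1 - z q) = μ := by
      rw [← mul_div_cancel_right₀ μ hp, ← heig, Finset.sum_div]
      refine Finset.sum_congr rfl fun q _ => ?_
      simp only [z]
      field_simp
    simpa using congrArg Complex.re this
  have hterm_nonneg : ∀ q ∈ Finset.univ, 0 ≤ A p q * (1 - (z q).re) :=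
    fun q _ => mul_nonneg (hA p q) (sub_nonneg.mpr (hz_re q))
  have hterm_zero := (Finset.sum_eq_zero_iff_of_nonneg hterm_nonneg).mp
    (le_antisymm (hsum ▸ hμ) (Finset.sum_nonneg hterm_nonneg)) q (Finset.mem_univ q)
  have hre : (z q).re = 1 := by
    rcases mul_eq_zero.mp hterm_zero with h | h
    · exact absurd h hq.ne'
    · linarith
  have him : (z q).im = 0 := Complex.abs_re_eq_norm.mp <|
    le_antisymm (Complex.abs_re_le_norm _) (by rw [hre, abs_one]; exact hz_norm q)
  have hz : z q = 1 := Complex.ext hre him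
  simpa [z, div_eq_one_iff_eq hp] using hz

theorem eq_of_laplacian_eigen_of_pow_apply_pos [DecidableEq n] (hA : ∀ i j, 0 ≤ A i j)
    (hμ : μ.re ≤ 0) (heig : ∀ p, w p ≠ 0 → ∑ q, (A p q : ℂ) * (w p - w q) = μ * w p) {p : n}
    (hmax : ∀ q, ‖w q‖ ≤ ‖w p‖) (hp : w p ≠ 0) {k : ℕ} {q : n} (hk : 0 < (A ^ k) p q) :
    w q = w p := by
  refine mem_of_mem_of_pow_apply_pos hA (S := ({r | w r = w p} : Set n))
    (fun r s hr hrs => ?_) rfl hk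
  have hr : w r = w p := hr
  have hr0 : w r ≠ 0 := hr ▸ hp
  exact (eq_of_laplacian_eigen_of_forall_norm_le hA hμ (hr ▸ hmax) hr0 (heig r hr0) hrs).trans hr

end LaplacianEigenvector

theorem leader_follower_eigenvalues_pos_re_general
    (N : ℕ)
    (A : Matrix (Fin (N + 1)) (Fin (N + 1)) ℝ)
    (hA_nonneg : ∀ i j, 0 ≤ A i j)
    (D : Matrix (Fin (N + 1)) (Fin (N + 1)) ℝ)
    (hD : D = Matrix.diagonal fun i => ∑ j, A i j)
    (L : Matrix (Fin (N + 1)) (Fin (N + 1)) ℝ)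
    (hL : L = D - A)
    (H : Matrix (Fin N) (Fin N) ℝ)
    (hH : H = Matrix.of fun i j => L i.succ j.succ)
    (hroot : ∀ i : Fin (N + 1), i ≠ 0 → ∃ k : ℕ, 1 ≤ k ∧ 0 < (A ^ k) i 0) :
    ∀ μ : ℂ, (H.map Complex.ofReal).charpoly.IsRoot μ → 0 < μ.re := by
  intro μ hμ
  by_contra! hre
  have hμ' : Module.End.HasEigenvalue (toLin' (H.map Complex.ofReal)) μ := by
    rwa [Module.End.hasEigenvalue_iff_isRoot_charpoly, charpoly_toLin']
  obtain ⟨v, hv, hv0⟩ := hμ'.exists_hasEigenvector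
  have hHv : H.map Complex.ofReal *ᵥ v = μ • v := by
    simpa using Module.End.mem_eigenspace_iff.mp hv
  have hH_submatrix : H.map Complex.ofReal =
      ((diagonal fun i => ∑ j, A.map Complex.ofReal i j) - A.map Complex.ofReal).submatrix
        Fin.succ Fin.succ := by
    subst hH hL hD
    ext i j
    simp only [map_apply, of_apply, submatrix_apply, Matrix.sub_apply, diagonal_apply,
      Fin.succ_inj]
    split_ifs <;> simp
  set w : Fin (N + 1) → ℂ := Fin.cons 0 v
  have heig : ∀ p, w p ≠ 0 → ∑ q, (A p q : ℂ) * (w p - w q) = μ * w p := by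
    refine Fin.cases (fun h => absurd rfl h) fun i _ => ?_
    have := congrFun hHv i
    rw [hH_submatrix, submatrix_succ_mulVec_apply, diagonal_sum_sub_mulVec_apply] at this
    simpa [w] using this
  obtain ⟨p, hmax⟩ := Finite.exists_max fun q => ‖w q‖
  obtain ⟨i, hi⟩ := Function.ne_iff.mp hv0
  have hp : w p ≠ 0 := norm_pos_iff.mp ((norm_pos_iff.mpr hi).trans_le (hmax i.succ))
  obtain ⟨k, -, hk⟩ := hroot p fun h => hp (h ▸ rfl)
  exact hp (eq_of_laplacian_eigen_of_pow_apply_pos hA_nonneg hre heig hmax hp hk).symm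

/-- If the leader (node `0`) is a root of the communication graph, then every
eigenvalue of the leader-follower matrix `H` has positive real part. -/
theorem leader_follower_eigenvalues_pos_re
    (N : ℕ) (hN : 1 ≤ N)
    (A : Matrix (Fin (N + 1)) (Fin (N + 1)) ℝ)
    (hA_nonneg : ∀ i j, 0 ≤ A i j)
    (hA_diag : ∀ i, A i i = 0)
    (hA_row0 : ∀ j, A 0 j = 0)
    (D : Matrix (Fin (N + 1)) (Fin (N + 1)) ℝ)
    (hD : D = Matrix.diagonal fun i => ∑ j, A i j)
    (L : Matrix (Fin (N + 1)) (Fin (N + 1)) ℝ)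
    (hL : L = D - A)
    (H : Matrix (Fin N) (Fin N) ℝ)
    (hH : H = Matrix.of fun i j => L i.succ j.succ)
    (hroot : ∀ i : Fin (N + 1), i ≠ 0 → ∃ k : ℕ, 1 ≤ k ∧ 0 < (A ^ k) i 0) :
    ∀ μ : ℂ, (H.map Complex.ofReal).charpoly.IsRoot μ → 0 < μ.re :=
  leader_follower_eigenvalues_pos_re_general N A hA_nonneg D hD L hL H hH hroot
end

section
/- Let n₋ ≥ 1, n₊ ≥ 0, n = n₋ + n₊, and n_w ≥ 1. Let Λ : [0,1] → ℝ^{n×n} be diagonal with continuously differentiable diagonal entries λ₁(z) ≥ … ≥ λ_{n₋}(z) > 0 > λ_{n₋+1}(z) ≥ … ≥ λ_n(z) for all z ∈ [0,1]. Let A : [0,1] → ℝ^{n×n} and A₀ : [0,1] → ℝ^{n×n₋} be continuously differentiable, F : [0,1]² → ℝ^{n×n} be continuously differentiable, C : [0,1] → ℝ^{n×n_w} be continuous, and let F̃_w ∈ ℝ^{n_w×n_w}, K_w ∈ ℝ^{n₋×n_w}, Q₀ ∈ ℝ^{n₊×n₋}, C₀ ∈ ℝ^{n₊×n_w} be constant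 matrices. Then there exists a unique continuously differentiable Σ : [0,1] → ℝ^{n×n_w} satisfying the decoupling equations Λ(z)Σ′(z) + A(z)Σ(z) − Σ(z)F̃_w + ∫₀^z F(z,ζ)Σ(ζ) dζ = A₀(z)K_w − C(z) for all z ∈ (0,1], together with the initial condition Σ(0) = −E₋K_w + E₊(C₀ − Q₀K_w). -/
open Matrix Set

/-- `E₋ = [I_{n₋}; 0] ∈ ℝ^{(n₋+n₊)×n₋}`. -/
def Eminus (nm np : ℕ) : Matrix (Fin (nm + np)) (Fin nm) ℝ :=
  Matrix.of fun i j => if (i : ℕ) = (j : ℕ) then 1 else 0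

/-- `E₊ = [0; I_{n₊}] ∈ ℝ^{(n₋+n₊)×n₊}`. -/
def Eplus (nm np : ℕ) : Matrix (Fin (nm + np)) (Fin np) ℝ :=
  Matrix.of fun i j => if (i : ℕ) = nm + (j : ℕ) then 1 else 0

/-!
Since `Λ(z)` is diagonal with non-vanishing diagonal, the decoupling equations can be solved for
`Σ'`; integrating from `0` turns them, together with the initial condition, into the linear
Volterra equation `Σ(z) = Σ(0) + ∫₀^z (v(s, Σ(s)) + ∫₀^s w(s, t, Σ(t)) dt) ds`, whose coefficients
are continuous on `[0,1]` and hence uniformly Lipschitz, say with constant `L`. By induction, the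
`N`-th iterate of the Picard operator moves two functions at most `(2L)^N z^N / N!` times their
sup distance apart at `z`, so some iterate is a contraction of `C([0,1])`. Its fixed point is the
unique continuous solution of the integral equation, and it is `C¹` by the fundamental theorem of
calculus.
-/

open MeasureTheory intervalIntegral Function NNReal

noncomputable section Volterra

variable {E : Type*} [NormedAddCommGroup E] [NormedSpace ℝ E]

def volterraRHS (v : ℝ → E → E) (w : ℝ → ℝ → E → E) (f : ℝ → E) (s : ℝ) : E :=
  v s (f s) + ∫ t in (0 : ℝ)..s, w s t (f t)

def volterraMap (x₀ : E) (v : ℝ → E → E) (w : ℝ → ℝ → E → E) (f : ℝ → E) (z : ℝ) : E :=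
  x₀ + ∫ s in (0 : ℝ)..z, volterraRHS v w f s

variable {x₀ : E} {v : ℝ → E → E} {w : ℝ → ℝ → E → E} {f g : ℝ → E} {b : ℝ}

theorem volterraRHS_congr (hfg : EqOn f g (Icc 0 b)) {s : ℝ} (hs : s ∈ Icc 0 b) :
    volterraRHS v w f s = volterraRHS v w g s := by
  unfold volterraRHS
  rw [hfg hs, integral_congr fun t ht => ?_]
  rw [uIcc_of_le hs.1] at ht
  rw [hfg ⟨ht.1, ht.2.trans hs.2⟩]

theorem volterraMap_congr (hfg : EqOn f g (Icc 0 b)) {z : ℝ} (hz : z ∈ Icc 0 b) :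
    volterraMap x₀ v w f z = volterraMap x₀ v w g z := by
  unfold volterraMap
  rw [integral_congr fun s hs => ?_]
  rw [uIcc_of_le hz.1] at hs
  exact volterraRHS_congr hfg ⟨hs.1, hs.2.trans hz.2⟩

theorem continuous_volterraRHS (hv : Continuous (uncurry v))
    (hw : Continuous fun p : ℝ × ℝ × E => w p.1 p.2.1 p.2.2) (hf : Continuous f) :
    Continuous (volterraRHS v w f) :=
  (hv.comp (continuous_id.prodMk hf)).add <| continuous_parametric_intervalIntegral_of_continuous
    (f := fun s t => w s t (f t))
    (hw.comp (continuous_fst.prodMk (continuous_snd.prodMk (hf.comp continuous_snd))))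
    continuous_id

theorem continuousOn_volterraRHS (hv : Continuous (uncurry v))
    (hw : Continuous fun p : ℝ × ℝ × E => w p.1 p.2.1 p.2.2) (hf : ContinuousOn f (Icc 0 1)) :
    ContinuousOn (volterraRHS v w f) (Icc 0 1) := by
  have hext : EqOn (IccExtend zero_le_one ((Icc 0 1).domRestrict f)) f (Icc 0 1) :=
    fun s hs => IccExtend_of_mem _ _ hs
  exact (continuous_volterraRHS hv hw hf.domRestrict.Icc_extend').continuousOn.congr
    fun s hs => (volterraRHS_congr hext hs).symm

theorem norm_volterraRHS_sub_le {L : ℝ≥0}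
    (hw : Continuous fun p : ℝ × ℝ × E => w p.1 p.2.1 p.2.2)
    (hvL : ∀ s, LipschitzWith L (v s)) (hwL : ∀ s t, LipschitzWith L (w s t))
    (hf : Continuous f) (hg : Continuous g) {c : ℝ} (hc : 0 ≤ c) {N : ℕ}
    (hfg : ∀ s ∈ Icc (0 : ℝ) 1, ‖f s - g s‖ ≤ c * s ^ N) {s : ℝ} (hs : s ∈ Icc (0 : ℝ) 1) :
    ‖volterraRHS v w f s - volterraRHS v w g s‖ ≤ 2 * L * c * s ^ N := by
  have hwf : Continuous fun t => w s t (f t) :=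
    hw.comp (continuous_const.prodMk (continuous_id.prodMk hf))
  have hwg : Continuous fun t => w s t (g t) :=
    hw.comp (continuous_const.prodMk (continuous_id.prodMk hg))
  have hv_le : ‖v s (f s) - v s (g s)‖ ≤ L * (c * s ^ N) :=
    ((hvL s).norm_sub_le _ _).trans (by gcongr; exact hfg s hs)
  have hw_le : ‖∫ t in (0 : ℝ)..s, (w s t (f t) - w s t (g t))‖ ≤ L * (c * s ^ N) := by
    refine (intervalIntegral.norm_integral_le_of_norm_le_const
      (C := L * (c * s ^ N)) fun t ht => ?_).trans ?_
    · rw [uIoc_of_le hs.1] at ht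
      refine ((hwL s t).norm_sub_le _ _).trans ?_
      gcongr
      exact (hfg t ⟨ht.1.le, ht.2.trans hs.2⟩).trans
        (mul_le_mul_of_nonneg_left (pow_le_pow_left₀ ht.1.le ht.2 N) hc)
    · rw [sub_zero, abs_of_nonneg hs.1]
      exact mul_le_of_le_one_right (by have := hs.1; positivity) hs.2
  calc ‖volterraRHS v w f s - volterraRHS v w g s‖
      = ‖(v s (f s) - v s (g s)) + ∫ t in (0 : ℝ)..s, (w s t (f t) - w s t (g t))‖ := by
        rw [volterraRHS, volterraRHS, integral_sub (hwf.intervalIntegrable _ _)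
          (hwg.intervalIntegrable _ _), add_sub_add_comm]
    _ ≤ L * (c * s ^ N) + L * (c * s ^ N) := norm_add_le_of_le hv_le hw_le
    _ = 2 * L * c * s ^ N := by ring

variable [CompleteSpace E]

theorem hasDerivAt_volterraMap (hv : Continuous (uncurry v))
    (hw : Continuous fun p : ℝ × ℝ × E => w p.1 p.2.1 p.2.2) (hf : Continuous f) (z : ℝ) :
    HasDerivAt (volterraMap x₀ v w f) (volterraRHS v w f z) z :=
  ((continuous_volterraRHS hv hw hf).integral_hasStrictDerivAt 0 z).hasDerivAt.const_add x₀

theorem continuous_volterraMap (hv : Continuous (uncurry v))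
    (hw : Continuous fun p : ℝ × ℝ × E => w p.1 p.2.1 p.2.2) (hf : Continuous f) :
    Continuous (volterraMap x₀ v w f) :=
  continuous_iff_continuousAt.2 fun z => (hasDerivAt_volterraMap hv hw hf z).continuousAt

def volterraPicard (x₀ : E) (hv : Continuous (uncurry v))
    (hw : Continuous fun p : ℝ × ℝ × E => w p.1 p.2.1 p.2.2) :
    C(Icc (0 : ℝ) 1, E) → C(Icc (0 : ℝ) 1, E) := fun f =>
  ⟨fun z => volterraMap x₀ v w (IccExtend zero_le_one f) z,
    (continuous_volterraMap hv hw f.continuous.Icc_extend').comp continuous_subtype_val⟩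

section Picard

variable {hv : Continuous (uncurry v)} {hw : Continuous fun p : ℝ × ℝ × E => w p.1 p.2.1 p.2.2}
  {L : ℝ≥0}

theorem dist_iterate_volterraPicard_le (hvL : ∀ s, LipschitzWith L (v s))
    (hwL : ∀ s t, LipschitzWith L (w s t)) (N : ℕ) (f g : C(Icc (0 : ℝ) 1, E))
    (z : Icc (0 : ℝ) 1) :
    dist ((volterraPicard x₀ hv hw)^[N] f z) ((volterraPicard x₀ hv hw)^[N] g z) ≤
      (2 * L) ^ N * (z : ℝ) ^ N / N.factorial * dist f g := by
  induction N generalizing z with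
  | zero => simpa using ContinuousMap.dist_apply_le_dist z
  | succ N ih =>
    set c : ℝ := (2 * L) ^ N / N.factorial * dist f g
    have hc : 0 ≤ c := by positivity
    have hfg : ∀ s ∈ Icc (0 : ℝ) 1,
        ‖IccExtend zero_le_one ((volterraPicard x₀ hv hw)^[N] f) s -
          IccExtend zero_le_one ((volterraPicard x₀ hv hw)^[N] g) s‖ ≤ c * s ^ N := by
      intro s hs
      rw [IccExtend_of_mem _ _ hs, IccExtend_of_mem _ _ hs, ← dist_eq_norm]
      exact (ih ⟨s, hs⟩).trans_eq (by simp only [c]; ring)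
    have hF := ((volterraPicard x₀ hv hw)^[N] f).continuous.Icc_extend' (h := zero_le_one)
    have hG := ((volterraPicard x₀ hv hw)^[N] g).continuous.Icc_extend' (h := zero_le_one)
    rw [iterate_succ_apply', iterate_succ_apply', dist_eq_norm]
    change ‖volterraMap x₀ v w _ z - volterraMap x₀ v w _ z‖ ≤ _
    rw [volterraMap, volterraMap, add_sub_add_left_eq_sub, ← integral_sub
      ((continuous_volterraRHS hv hw hF).intervalIntegrable _ _)
      ((continuous_volterraRHS hv hw hG).intervalIntegrable _ _)]
    calc _ ≤ ∫ s in (0 : ℝ)..z, 2 * L * c * s ^ N := by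
          refine intervalIntegral.norm_integral_le_of_norm_le z.2.1 (ae_of_all _ fun s hs => ?_)
            ((by fun_prop : Continuous fun s : ℝ => 2 * L * c * s ^ N).intervalIntegrable _ _)
          exact norm_volterraRHS_sub_le hw hvL hwL hF hG hc hfg ⟨hs.1.le, hs.2.trans z.2.2⟩
      _ = (2 * L) ^ (N + 1) * (z : ℝ) ^ (N + 1) / (N + 1).factorial * dist f g := by
          rw [intervalIntegral.integral_const_mul, integral_pow, Nat.factorial_succ]
          simp only [c]
          push_cast
          field_simp
          ring

theorem lipschitzWith_iterate_volterraPicard (hvL : ∀ s, LipschitzWith L (v s))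
    (hwL : ∀ s t, LipschitzWith L (w s t)) (N : ℕ) :
    LipschitzWith ((2 * L) ^ N / N.factorial) (volterraPicard x₀ hv hw)^[N] := by
  refine LipschitzWith.of_dist_le_mul fun f g =>
    (ContinuousMap.dist_le (by positivity)).2 fun z => ?_
  refine (dist_iterate_volterraPicard_le hvL hwL N f g z).trans ?_
  have hz : (z : ℝ) ^ N ≤ 1 := pow_le_one₀ z.2.1 z.2.2
  calc (2 * (L : ℝ)) ^ N * (z : ℝ) ^ N / N.factorial * dist f g
      ≤ (2 * (L : ℝ)) ^ N * 1 / N.factorial * dist f g := by gcongr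
    _ = _ := by push_cast; ring

theorem exists_contractingWith_iterate_volterraPicard (hvL : ∀ s, LipschitzWith L (v s))
    (hwL : ∀ s t, LipschitzWith L (w s t)) :
    ∃ N : ℕ, ContractingWith ((2 * L) ^ N / N.factorial) (volterraPicard x₀ hv hw)^[N] := by
  obtain ⟨N, hN⟩ := ((FloorSemiring.tendsto_pow_div_factorial_atTop (2 * (L : ℝ))).eventually
    (gt_mem_nhds one_pos)).exists
  refine ⟨N, ?_, lipschitzWith_iterate_volterraPicard hvL hwL N⟩
  rw [← NNReal.coe_lt_coe]
  push_cast
  exact hN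

theorem existsUnique_fixedPoint_volterraPicard (hvL : ∀ s, LipschitzWith L (v s))
    (hwL : ∀ s t, LipschitzWith L (w s t)) :
    ∃! f, volterraPicard x₀ hv hw f = f := by
  obtain ⟨N, hN⟩ := exists_contractingWith_iterate_volterraPicard (x₀ := x₀) (hv := hv) (hw := hw)
    hvL hwL
  exact ⟨_, hN.isFixedPt_fixedPoint_iterate,
    fun f hf => hN.fixedPoint_unique (IsFixedPt.iterate hf N)⟩

end Picard

theorem exists_unique_solution_volterraMap (x₀ : E) (hv : Continuous (uncurry v))
    (hw : Continuous fun p : ℝ × ℝ × E => w p.1 p.2.1 p.2.2) {L : ℝ≥0}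
    (hvL : ∀ s, LipschitzWith L (v s)) (hwL : ∀ s t, LipschitzWith L (w s t)) :
    ∃ f : ℝ → E, Continuous f ∧ (∀ z ∈ Icc (0 : ℝ) 1, f z = volterraMap x₀ v w f z) ∧
      ∀ g : ℝ → E, ContinuousOn g (Icc 0 1) →
        (∀ z ∈ Icc (0 : ℝ) 1, g z = volterraMap x₀ v w g z) → EqOn g f (Icc 0 1) := by
  obtain ⟨F, hF, huniq⟩ :=
    existsUnique_fixedPoint_volterraPicard (x₀ := x₀) (hv := hv) (hw := hw) hvL hwL
  refine ⟨IccExtend zero_le_one F, F.continuous.Icc_extend', fun z hz => ?_,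
    fun g hg hgeq z hz => ?_⟩
  · rw [IccExtend_of_mem _ _ hz]
    conv_lhs => rw [← hF]
    rfl
  · let G : C(Icc (0 : ℝ) 1, E) := ⟨(Icc 0 1).domRestrict g, hg.domRestrict⟩
    have hGg : EqOn (IccExtend zero_le_one G) g (Icc 0 1) := fun s hs => IccExtend_of_mem _ _ hs
    have hG : volterraPicard x₀ hv hw G = G := by
      ext ⟨s, hs⟩
      exact (volterraMap_congr hGg hs).trans (hgeq s hs).symm
    rw [IccExtend_of_mem _ _ hz, ← huniq G hG]
    rfl

end Volterra

section FTC

variable {E : Type*} [NormedAddCommGroup E] [NormedSpace ℝ E] [CompleteSpace E]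
  {f g : ℝ → E} {x₀ : E} {a b z : ℝ}

theorem contDiffOn_of_eqOn_add_integral (hg : Continuous g)
    (hf : EqOn f (fun z => x₀ + ∫ s in a..z, g s) (Icc a b)) : ContDiffOn ℝ 1 f (Icc a b) := by
  have hderiv : ∀ z, HasDerivAt (fun z => x₀ + ∫ s in a..z, g s) (g z) z := fun z =>
    (hg.integral_hasStrictDerivAt a z).hasDerivAt.const_add x₀
  refine ContDiffOn.congr ?_ hf
  refine (contDiff_one_iff_deriv.2 ⟨fun z => (hderiv z).differentiableAt, ?_⟩).contDiffOn
  rwa [funext fun z => (hderiv z).deriv]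

theorem derivWithin_of_eqOn_add_integral (hab : a < b) (hg : Continuous g)
    (hf : EqOn f (fun z => x₀ + ∫ s in a..z, g s) (Icc a b)) (hz : z ∈ Icc a b) :
    derivWithin f (Icc a b) z = g z := by
  rw [derivWithin_congr hf (hf hz)]
  exact ((hg.integral_hasStrictDerivAt a z).hasDerivAt.const_add x₀).hasDerivWithinAt.derivWithin
    (uniqueDiffOn_Icc hab z hz)

theorem eq_add_integral_derivWithin_of_contDiffOn (hab : a < b) (hf : ContDiffOn ℝ 1 f (Icc a b))
    (hz : z ∈ Icc a b) : f z = f a + ∫ s in a..z, derivWithin f (Icc a b) s := by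
  have hsub : Icc a z ⊆ Icc a b := Icc_subset_Icc_right hz.2
  have hderiv : ∀ t ∈ Ioo a z, HasDerivWithinAt f (derivWithin f (Icc a b) t) (Ioi t) t :=
    fun t ht => (hf.differentiableOn one_ne_zero t (hsub (Ioo_subset_Icc_self ht))
      |>.hasDerivWithinAt |>.hasDerivAt (Icc_mem_nhds ht.1 (ht.2.trans_le hz.2))).hasDerivWithinAt
  have hint := ((hf.continuousOn_derivWithin (uniqueDiffOn_Icc hab) le_rfl).mono hsub
    ).intervalIntegrable_of_Icc (μ := volume) hz.1
  rw [integral_eq_sub_of_hasDeriv_right_of_le hz.1 (hf.continuousOn.mono hsub) hderiv hint,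
    add_sub_cancel]

end FTC

theorem continuousOn_matrix_iff {X m n R : Type*} [TopologicalSpace X] [TopologicalSpace R]
    {f : X → Matrix m n R} {s : Set X} :
    ContinuousOn f s ↔ ∀ i j, ContinuousOn (fun x => f x i j) s :=
  continuousOn_pi.trans (forall_congr' fun _ => continuousOn_pi)

theorem ContinuousOn.matrix_mul {X m n p R : Type*} [TopologicalSpace X] [TopologicalSpace R]
    [Fintype n] [NonUnitalNonAssocSemiring R] [IsTopologicalSemiring R]
    {A : X → Matrix m n R} {B : X → Matrix n p R} {s : Set X} (hA : ContinuousOn A s)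
    (hB : ContinuousOn B s) : ContinuousOn (fun x => A x * B x) s :=
  continuousOn_iff_continuous_domRestrict.2 (hA.domRestrict.matrix_mul hB.domRestrict)

def Matrix.diagInv {m K : Type*} [DecidableEq m] [Zero K] [Inv K] (M : Matrix m m K) :
    Matrix m m K :=
  diagonal fun i => (M i i)⁻¹

theorem ContinuousOn.matrix_diagInv {X m : Type*} [TopologicalSpace X] [DecidableEq m]
    {M : X → Matrix m m ℝ} {s : Set X} (hM : ContinuousOn M s)
    (hne : ∀ x ∈ s, ∀ i, M x i i ≠ 0) : ContinuousOn (fun x => diagInv (M x)) s :=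
  continuousOn_iff_continuous_domRestrict.2 <| Continuous.matrix_diagonal <| continuous_pi fun i =>
    (hM.domRestrict.matrix_elem i i).inv₀ fun x => hne x x.2 i

theorem Matrix.IsDiag.mul_eq_iff {m k K : Type*} [Fintype m] [DecidableEq m] [Field K]
    {M : Matrix m m K} (hM : M.IsDiag) (hne : ∀ i, M i i ≠ 0) {X Y : Matrix m k K} :
    M * X = Y ↔ X = diagInv M * Y := by
  conv_lhs => rw [← hM.diagonal_diag]
  simp only [diagInv, ← Matrix.ext_iff, diagonal_mul, diag_apply, eq_inv_mul_iff_mul_eq₀ (hne _)]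

-- Any norm would do; the `ℓ∞`-operator norm is submultiplicative (`linfty_opNorm_mul`).
attribute [local instance] Matrix.linftyOpNormedAddCommGroup Matrix.linftyOpNormedSpace

theorem Matrix.intervalIntegral_apply {m n : Type*} [Fintype m] [Fintype n]
    {Ψ : ℝ → Matrix m n ℝ} {a b : ℝ} (hΨ : ContinuousOn Ψ (uIcc a b)) (i : m) (j : n) :
    (∫ s in a..b, Ψ s) i j = ∫ s in a..b, Ψ s i j :=
  ((entryLinearMap ℝ ℝ i j).toContinuousLinearMap.intervalIntegral_comp_comm
    hΨ.intervalIntegrable).symm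

noncomputable def unitClamp (s : ℝ) : ℝ := projIcc (0 : ℝ) 1 zero_le_one s

theorem unitClamp_mem (s : ℝ) : unitClamp s ∈ Icc (0 : ℝ) 1 := (projIcc _ _ _ s).2

theorem unitClamp_of_mem {s : ℝ} (hs : s ∈ Icc (0 : ℝ) 1) : unitClamp s = s :=
  congrArg Subtype.val (projIcc_of_mem _ hs)

theorem continuous_unitClamp : Continuous unitClamp :=
  continuous_subtype_val.comp continuous_projIcc

theorem ContinuousOn.comp_unitClamp {X : Type*} [TopologicalSpace X] {f : ℝ → X}
    (hf : ContinuousOn f (Icc 0 1)) : Continuous fun s => f (unitClamp s) :=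
  hf.comp_continuous continuous_unitClamp unitClamp_mem

theorem ContinuousOn.exists_bound_comp_unitClamp {X : Type*} [SeminormedAddCommGroup X]
    {f : ℝ → X} (hf : ContinuousOn f (Icc 0 1)) : ∃ C, ∀ s, ‖f (unitClamp s)‖ ≤ C :=
  (isCompact_Icc.exists_bound_of_continuousOn hf).imp fun _ hC s => hC _ (unitClamp_mem s)

section DecouplingProblem

variable {m k : Type*} {Λ A : ℝ → Matrix m m ℝ} {F : ℝ → ℝ → Matrix m m ℝ}
  {B : ℝ → Matrix m k ℝ} {Fw : Matrix k k ℝ} {S₀ : Matrix m k ℝ}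

structure AdmissibleCoeffs (Λ A : ℝ → Matrix m m ℝ) (F : ℝ → ℝ → Matrix m m ℝ)
    (B : ℝ → Matrix m k ℝ) : Prop where
  isDiag : ∀ z ∈ Icc (0 : ℝ) 1, (Λ z).IsDiag
  diag_ne_zero : ∀ z ∈ Icc (0 : ℝ) 1, ∀ i, Λ z i i ≠ 0
  continuousOn_Λ : ContinuousOn Λ (Icc 0 1)
  continuousOn_A : ContinuousOn A (Icc 0 1)
  continuousOn_F : ContinuousOn (uncurry F) (Icc 0 1 ×ˢ Icc 0 1)
  continuousOn_B : ContinuousOn B (Icc 0 1)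

variable [Fintype m] [Fintype k]

def IsDecouplingSolution (Λ A : ℝ → Matrix m m ℝ) (F : ℝ → ℝ → Matrix m m ℝ)
    (Fw : Matrix k k ℝ) (B : ℝ → Matrix m k ℝ) (S₀ : Matrix m k ℝ) (S : ℝ → Matrix m k ℝ) :
    Prop :=
  (∀ i j, ContDiffOn ℝ 1 (fun z => S z i j) (Icc 0 1)) ∧
    (∀ z ∈ Ioc (0 : ℝ) 1,
      Λ z * (Matrix.of fun i j => derivWithin (fun t => S t i j) (Icc 0 1) z) + A z * S z
        - S z * Fw + (Matrix.of fun i j => ∫ ζ in (0 : ℝ)..z, (F z ζ * S ζ) i j) = B z) ∧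
    S 0 = S₀

theorem IsDecouplingSolution.continuousOn {S : ℝ → Matrix m k ℝ}
    (hS : IsDecouplingSolution Λ A F Fw B S₀ S) : ContinuousOn S (Icc 0 1) :=
  continuousOn_matrix_iff.2 fun i j => (hS.1 i j).continuousOn

end DecouplingProblem

section Decoupling

variable {m k : Type*} [Fintype m] [DecidableEq m] {Λ A : ℝ → Matrix m m ℝ}
  {F : ℝ → ℝ → Matrix m m ℝ} {B : ℝ → Matrix m k ℝ} {Fw : Matrix k k ℝ} {S₀ : Matrix m k ℝ}

/- The decoupling equation solved for the derivative reads
`Σ'(z) = decouplingV z (Σ z) + ∫₀^z decouplingW z t (Σ t) dt`. The coefficients are frozen outside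
`[0,1]` so that both maps are continuous on all of `ℝ`. -/

noncomputable def decouplingW (Λ : ℝ → Matrix m m ℝ) (F : ℝ → ℝ → Matrix m m ℝ) (s t : ℝ)
    (X : Matrix m k ℝ) : Matrix m k ℝ :=
  -(diagInv (Λ (unitClamp s)) * (F (unitClamp s) (unitClamp t) * X))

theorem AdmissibleCoeffs.continuous_decouplingW (h : AdmissibleCoeffs Λ A F B) :
    Continuous fun p : ℝ × ℝ × Matrix m k ℝ => decouplingW Λ F p.1 p.2.1 p.2.2 := by
  have hD := (h.continuousOn_Λ.matrix_diagInv h.diag_ne_zero).comp_unitClamp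
  have hF : Continuous fun q : ℝ × ℝ => F (unitClamp q.1) (unitClamp q.2) :=
    h.continuousOn_F.comp_continuous (continuous_unitClamp.prodMap continuous_unitClamp)
      fun q => ⟨unitClamp_mem q.1, unitClamp_mem q.2⟩
  exact ((hD.comp continuous_fst).matrix_mul ((hF.comp
    (continuous_fst.prodMk (continuous_fst.comp continuous_snd))).matrix_mul
    (continuous_snd.comp continuous_snd))).neg

variable [Fintype k]

noncomputable def decouplingV (Λ A : ℝ → Matrix m m ℝ) (Fw : Matrix k k ℝ)
    (B : ℝ → Matrix m k ℝ) (s : ℝ) (X : Matrix m k ℝ) : Matrix m k ℝ :=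
  diagInv (Λ (unitClamp s)) * (B (unitClamp s) - A (unitClamp s) * X + X * Fw)

theorem dist_decouplingW_le (s t : ℝ) (X Y : Matrix m k ℝ) :
    dist (decouplingW Λ F s t X) (decouplingW Λ F s t Y) ≤
      ‖diagInv (Λ (unitClamp s))‖ * ‖F (unitClamp s) (unitClamp t)‖ * dist X Y := by
  rw [dist_eq_norm, dist_eq_norm, decouplingW, decouplingW, neg_sub_neg, norm_sub_rev,
    ← Matrix.mul_sub, ← Matrix.mul_sub, mul_assoc]
  exact (linfty_opNorm_mul _ _).trans
    (mul_le_mul_of_nonneg_left (linfty_opNorm_mul _ _) (norm_nonneg _))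

theorem dist_decouplingV_le (s : ℝ) (X Y : Matrix m k ℝ) :
    dist (decouplingV Λ A Fw B s X) (decouplingV Λ A Fw B s Y) ≤
      ‖diagInv (Λ (unitClamp s))‖ * (‖A (unitClamp s)‖ + ‖Fw‖) * dist X Y := by
  rw [dist_eq_norm, dist_eq_norm]
  calc ‖decouplingV Λ A Fw B s X - decouplingV Λ A Fw B s Y‖
      = ‖diagInv (Λ (unitClamp s)) * ((X - Y) * Fw - A (unitClamp s) * (X - Y))‖ := by
        rw [decouplingV, decouplingV, ← Matrix.mul_sub]
        congr 2
        simp only [Matrix.mul_sub, Matrix.sub_mul]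
        abel
    _ ≤ ‖diagInv (Λ (unitClamp s))‖ * (‖X - Y‖ * ‖Fw‖ + ‖A (unitClamp s)‖ * ‖X - Y‖) :=
        (linfty_opNorm_mul _ _).trans (mul_le_mul_of_nonneg_left ((norm_sub_le _ _).trans
          (add_le_add (linfty_opNorm_mul _ _) (linfty_opNorm_mul _ _))) (norm_nonneg _))
    _ = _ := by ring

namespace AdmissibleCoeffs

theorem continuous_decouplingV (h : AdmissibleCoeffs Λ A F B) :
    Continuous (uncurry (decouplingV Λ A Fw B)) := by
  have hD := (h.continuousOn_Λ.matrix_diagInv h.diag_ne_zero).comp_unitClamp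
  have hA := h.continuousOn_A.comp_unitClamp
  have hB := h.continuousOn_B.comp_unitClamp
  exact (hD.comp continuous_fst).matrix_mul (((hB.comp continuous_fst).sub
    ((hA.comp continuous_fst).matrix_mul continuous_snd)).add
    (continuous_snd.matrix_mul continuous_const))

theorem exists_lipschitzWith_decoupling (h : AdmissibleCoeffs Λ A F B) (Fw : Matrix k k ℝ) :
    ∃ L : ℝ≥0, (∀ s, LipschitzWith L (decouplingV Λ A Fw B s)) ∧
      ∀ s t, LipschitzWith L (decouplingW (k := k) Λ F s t) := by
  obtain ⟨KD, hKD⟩ :=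
    (h.continuousOn_Λ.matrix_diagInv h.diag_ne_zero).exists_bound_comp_unitClamp
  obtain ⟨KA, hKA⟩ := h.continuousOn_A.exists_bound_comp_unitClamp
  obtain ⟨KF, hKF⟩ :=
    (isCompact_Icc.prod isCompact_Icc).exists_bound_of_continuousOn h.continuousOn_F
  have hKF' : ∀ s t, ‖F (unitClamp s) (unitClamp t)‖ ≤ KF :=
    fun s t => hKF (unitClamp s, unitClamp t) ⟨unitClamp_mem s, unitClamp_mem t⟩
  have hKD0 : 0 ≤ KD := (norm_nonneg _).trans (hKD 0)
  have hKA0 : 0 ≤ KA := (norm_nonneg _).trans (hKA 0)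
  have hKF0 : 0 ≤ KF := (norm_nonneg _).trans (hKF' 0 0)
  refine ⟨(KD * (KA + ‖Fw‖ + KF)).toNNReal, fun s => LipschitzWith.of_dist_le' fun X Y => ?_,
    fun s t => LipschitzWith.of_dist_le' fun X Y => ?_⟩
  · refine (dist_decouplingV_le s X Y).trans (mul_le_mul_of_nonneg_right ?_ dist_nonneg)
    exact mul_le_mul (hKD s) (by linarith [hKA s]) (by positivity) hKD0
  · refine (dist_decouplingW_le s t X Y).trans (mul_le_mul_of_nonneg_right ?_ dist_nonneg)
    exact mul_le_mul (hKD s) (by linarith [hKF' s t, norm_nonneg Fw]) (norm_nonneg _) hKD0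

theorem decoupling_eq_iff_eq_volterraRHS (h : AdmissibleCoeffs Λ A F B) {S : ℝ → Matrix m k ℝ}
    (hS : ContinuousOn S (Icc 0 1)) {z : ℝ} (hz : z ∈ Icc (0 : ℝ) 1) (S' : Matrix m k ℝ) :
    Λ z * S' + A z * S z - S z * Fw
        + (Matrix.of fun i j => ∫ ζ in (0 : ℝ)..z, (F z ζ * S ζ) i j) = B z ↔
      S' = volterraRHS (decouplingV Λ A Fw B) (decouplingW Λ F) S z := by
  set D := diagInv (Λ z)
  have hsub : uIcc 0 z ⊆ Icc 0 1 := by rw [uIcc_of_le hz.1]; exact Icc_subset_Icc_right hz.2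
  have hF : ContinuousOn (fun ζ => F z ζ) (Icc 0 1) :=
    h.continuousOn_F.comp (continuous_const.prodMk continuous_id).continuousOn
      fun ζ hζ => ⟨hz, hζ⟩
  have hFS : ContinuousOn (fun ζ => F z ζ * S ζ) (uIcc 0 z) := (hF.matrix_mul hS).mono hsub
  have hJ : (Matrix.of fun i j => ∫ ζ in (0 : ℝ)..z, (F z ζ * S ζ) i j) =
      ∫ ζ in (0 : ℝ)..z, F z ζ * S ζ := by
    ext i j
    rw [of_apply, Matrix.intervalIntegral_apply hFS]
  have hV : decouplingV Λ A Fw B z (S z) = D * (B z - A z * S z + S z * Fw) := by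
    simp only [decouplingV, unitClamp_of_mem hz, D]
  have hW : ∫ t in (0 : ℝ)..z, decouplingW Λ F z t (S t) =
      -(D * ∫ ζ in (0 : ℝ)..z, F z ζ * S ζ) := by
    have hcomm : ∫ ζ in (0 : ℝ)..z, D * (F z ζ * S ζ) = D * ∫ ζ in (0 : ℝ)..z, F z ζ * S ζ :=
      (mulLeftLinearMap k ℝ D).toContinuousLinearMap.intervalIntegral_comp_comm
        hFS.intervalIntegrable
    rw [← hcomm, ← intervalIntegral.integral_neg]
    refine integral_congr fun t ht => ?_
    simp only [decouplingW, unitClamp_of_mem hz, unitClamp_of_mem (hsub ht), D]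
  rw [volterraRHS, hV, hW, hJ, ← sub_eq_add_neg, ← Matrix.mul_sub,
    ← (h.isDiag z hz).mul_eq_iff (h.diag_ne_zero z hz)]
  constructor <;> intro h'
  · rw [← h']; abel
  · rw [h']; abel

theorem isDecouplingSolution_of_eq_volterraMap (h : AdmissibleCoeffs Λ A F B)
    {S : ℝ → Matrix m k ℝ} (hS : Continuous S) (hSeq : ∀ z ∈ Icc (0 : ℝ) 1,
      S z = volterraMap S₀ (decouplingV Λ A Fw B) (decouplingW Λ F) S z) :
    IsDecouplingSolution Λ A F Fw B S₀ S := by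
  have hR := continuous_volterraRHS (h.continuous_decouplingV (Fw := Fw))
    h.continuous_decouplingW hS
  have hentry : ∀ i j, EqOn (fun z => S z i j) (fun z => S₀ i j +
      ∫ s in (0 : ℝ)..z, volterraRHS (decouplingV Λ A Fw B) (decouplingW Λ F) S s i j)
      (Icc 0 1) := fun i j z hz => by
    dsimp only
    rw [hSeq z hz, volterraMap, Matrix.add_apply, Matrix.intervalIntegral_apply hR.continuousOn]
  refine ⟨fun i j => contDiffOn_of_eqOn_add_integral (hR.matrix_elem i j) (hentry i j),
    fun z hz => ?_, ?_⟩
  · have hz' : z ∈ Icc (0 : ℝ) 1 := Ioc_subset_Icc_self hz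
    rw [h.decoupling_eq_iff_eq_volterraRHS hS.continuousOn hz']
    ext i j
    exact derivWithin_of_eqOn_add_integral zero_lt_one (hR.matrix_elem i j) (hentry i j) hz'
  · rw [hSeq 0 ⟨le_rfl, zero_le_one⟩, volterraMap, integral_same, add_zero]

end AdmissibleCoeffs

theorem IsDecouplingSolution.eq_volterraMap {S : ℝ → Matrix m k ℝ}
    (hS : IsDecouplingSolution Λ A F Fw B S₀ S) (h : AdmissibleCoeffs Λ A F B)
    {z : ℝ} (hz : z ∈ Icc (0 : ℝ) 1) :
    S z = volterraMap S₀ (decouplingV Λ A Fw B) (decouplingW Λ F) S z := by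
  have hSc := hS.continuousOn
  obtain ⟨hC1, heq, h0⟩ := hS
  have hRc := continuousOn_volterraRHS (h.continuous_decouplingV (Fw := Fw))
    h.continuous_decouplingW hSc
  have hderiv : ∀ s ∈ Ioc (0 : ℝ) 1, ∀ i j, derivWithin (fun t => S t i j) (Icc 0 1) s =
      volterraRHS (decouplingV Λ A Fw B) (decouplingW Λ F) S s i j := fun s hs i j =>
    congrFun₂ ((h.decoupling_eq_iff_eq_volterraRHS hSc (Ioc_subset_Icc_self hs) _).1
      (heq s hs)) i j
  have hsub : uIcc 0 z ⊆ Icc 0 1 := by rw [uIcc_of_le hz.1]; exact Icc_subset_Icc_right hz.2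
  ext i j
  rw [eq_add_integral_derivWithin_of_contDiffOn zero_lt_one (hC1 i j) hz, volterraMap,
    Matrix.add_apply, h0, Matrix.intervalIntegral_apply (hRc.mono hsub)]
  refine congrArg _ (integral_congr_ae (ae_of_all _ fun s hs => ?_))
  rw [uIoc_of_le hz.1] at hs
  exact hderiv s ⟨hs.1, hs.2.trans hz.2⟩ i j

theorem AdmissibleCoeffs.exists_isDecouplingSolution_unique (h : AdmissibleCoeffs Λ A F B)
    (Fw : Matrix k k ℝ) (S₀ : Matrix m k ℝ) :
    ∃ S, IsDecouplingSolution Λ A F Fw B S₀ S ∧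
      ∀ S', IsDecouplingSolution Λ A F Fw B S₀ S' → EqOn S' S (Icc 0 1) := by
  obtain ⟨L, hVL, hWL⟩ := h.exists_lipschitzWith_decoupling Fw
  obtain ⟨S, hSc, hSeq, huniq⟩ := exists_unique_solution_volterraMap S₀
    (h.continuous_decouplingV (Fw := Fw)) h.continuous_decouplingW hVL hWL
  exact ⟨S, h.isDecouplingSolution_of_eq_volterraMap hSc hSeq,
    fun S' hS' => huniq S' hS'.continuousOn fun z hz => hS'.eq_volterraMap h hz⟩

end Decoupling

theorem local_decoupling_equations_unique_solution_general
    (nm np nw : ℕ)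
    (Λ : ℝ → Matrix (Fin (nm + np)) (Fin (nm + np)) ℝ)
    (hΛdiag : ∀ z ∈ Icc (0 : ℝ) 1, (Λ z).IsDiag)
    (hΛC1 : ∀ i j, ContDiffOn ℝ 1 (fun z => Λ z i j) (Icc 0 1))
    (hΛsign : ∀ z ∈ Icc (0 : ℝ) 1, ∀ i : Fin (nm + np),
      ((i : ℕ) < nm → 0 < Λ z i i) ∧ (nm ≤ (i : ℕ) → Λ z i i < 0))
    (A : ℝ → Matrix (Fin (nm + np)) (Fin (nm + np)) ℝ)
    (hA : ∀ i j, ContDiffOn ℝ 1 (fun z => A z i j) (Icc 0 1))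
    (A₀ : ℝ → Matrix (Fin (nm + np)) (Fin nm) ℝ)
    (hA₀ : ∀ i j, ContDiffOn ℝ 1 (fun z => A₀ z i j) (Icc 0 1))
    (F : ℝ → ℝ → Matrix (Fin (nm + np)) (Fin (nm + np)) ℝ)
    (hF : ∀ i j, ContDiffOn ℝ 1 (fun p : ℝ × ℝ => F p.1 p.2 i j) (Icc 0 1 ×ˢ Icc 0 1))
    (C : ℝ → Matrix (Fin (nm + np)) (Fin nw) ℝ)
    (hC : ∀ i j, ContinuousOn (fun z => C z i j) (Icc 0 1))
    (Fw : Matrix (Fin nw) (Fin nw) ℝ) (Kw : Matrix (Fin nm) (Fin nw) ℝ)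
    (Q₀ : Matrix (Fin np) (Fin nm) ℝ) (C₀ : Matrix (Fin np) (Fin nw) ℝ) :
    ∃ Sg : ℝ → Matrix (Fin (nm + np)) (Fin nw) ℝ,
      ((∀ i j, ContDiffOn ℝ 1 (fun z => Sg z i j) (Icc 0 1)) ∧
        (∀ z ∈ Ioc (0 : ℝ) 1,
          Λ z * (Matrix.of fun i j => derivWithin (fun t => Sg t i j) (Icc 0 1) z)
              + A z * Sg z - Sg z * Fw
              + (Matrix.of fun i j => ∫ ζ in (0 : ℝ)..z, (F z ζ * Sg ζ) i j)
            = A₀ z * Kw - C z) ∧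
        Sg 0 = -(Eminus nm np * Kw) + Eplus nm np * (C₀ - Q₀ * Kw)) ∧
      ∀ Sg' : ℝ → Matrix (Fin (nm + np)) (Fin nw) ℝ,
        ((∀ i j, ContDiffOn ℝ 1 (fun z => Sg' z i j) (Icc 0 1)) ∧
          (∀ z ∈ Ioc (0 : ℝ) 1,
            Λ z * (Matrix.of fun i j => derivWithin (fun t => Sg' t i j) (Icc 0 1) z)
                + A z * Sg' z - Sg' z * Fw
                + (Matrix.of fun i j => ∫ ζ in (0 : ℝ)..z, (F z ζ * Sg' ζ) i j)
              = A₀ z * Kw - C z) ∧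
          Sg' 0 = -(Eminus nm np * Kw) + Eplus nm np * (C₀ - Q₀ * Kw)) →
        ∀ z ∈ Icc (0 : ℝ) 1, Sg' z = Sg z := by
  have hΛne : ∀ z ∈ Icc (0 : ℝ) 1, ∀ i, Λ z i i ≠ 0 := fun z hz i => by
    rcases lt_or_ge (i : ℕ) nm with hi | hi
    exacts [((hΛsign z hz i).1 hi).ne', ((hΛsign z hz i).2 hi).ne]
  have hcoeffs : AdmissibleCoeffs Λ A F fun z => A₀ z * Kw - C z :=
    { isDiag := hΛdiag
      diag_ne_zero := hΛne
      continuousOn_Λ := continuousOn_matrix_iff.2 fun i j => (hΛC1 i j).continuousOn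
      continuousOn_A := continuousOn_matrix_iff.2 fun i j => (hA i j).continuousOn
      continuousOn_F := continuousOn_matrix_iff.2 fun i j => (hF i j).continuousOn
      continuousOn_B := ((continuousOn_matrix_iff.2 fun i j => (hA₀ i j).continuousOn).matrix_mul
        continuousOn_const).sub (continuousOn_matrix_iff.2 hC) }
  obtain ⟨S, hS, huniq⟩ := hcoeffs.exists_isDecouplingSolution_unique Fw
    (-(Eminus nm np * Kw) + Eplus nm np * (C₀ - Q₀ * Kw))
  exact ⟨S, hS, fun S' hS' => huniq S' hS'⟩

/-- the local decoupling equations have a unique continuously differentiable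
solution `Σ : [0,1] → ℝ^{n×n_w}`. -/
theorem local_decoupling_equations_unique_solution
    (nm np nw : ℕ) (hnm : 1 ≤ nm) (hnw : 1 ≤ nw)
    (Λ : ℝ → Matrix (Fin (nm + np)) (Fin (nm + np)) ℝ)
    (hΛdiag : ∀ z ∈ Icc (0 : ℝ) 1, (Λ z).IsDiag)
    (hΛC1 : ∀ i j, ContDiffOn ℝ 1 (fun z => Λ z i j) (Icc 0 1))
    (hΛsorted : ∀ z ∈ Icc (0 : ℝ) 1, ∀ i j : Fin (nm + np), i ≤ j → Λ z j j ≤ Λ z i i)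
    (hΛsign : ∀ z ∈ Icc (0 : ℝ) 1, ∀ i : Fin (nm + np),
      ((i : ℕ) < nm → 0 < Λ z i i) ∧ (nm ≤ (i : ℕ) → Λ z i i < 0))
    (A : ℝ → Matrix (Fin (nm + np)) (Fin (nm + np)) ℝ)
    (hA : ∀ i j, ContDiffOn ℝ 1 (fun z => A z i j) (Icc 0 1))
    (A₀ : ℝ → Matrix (Fin (nm + np)) (Fin nm) ℝ)
    (hA₀ : ∀ i j, ContDiffOn ℝ 1 (fun z => A₀ z i j) (Icc 0 1))
    (F : ℝ → ℝ → Matrix (Fin (nm + np)) (Fin (nm + np)) ℝ)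
    (hF : ∀ i j, ContDiffOn ℝ 1 (fun p : ℝ × ℝ => F p.1 p.2 i j) (Icc 0 1 ×ˢ Icc 0 1))
    (C : ℝ → Matrix (Fin (nm + np)) (Fin nw) ℝ)
    (hC : ∀ i j, ContinuousOn (fun z => C z i j) (Icc 0 1))
    (Fw : Matrix (Fin nw) (Fin nw) ℝ) (Kw : Matrix (Fin nm) (Fin nw) ℝ)
    (Q₀ : Matrix (Fin np) (Fin nm) ℝ) (C₀ : Matrix (Fin np) (Fin nw) ℝ) :
    ∃ Sg : ℝ → Matrix (Fin (nm + np)) (Fin nw) ℝ,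
      ((∀ i j, ContDiffOn ℝ 1 (fun z => Sg z i j) (Icc 0 1)) ∧
        (∀ z ∈ Ioc (0 : ℝ) 1,
          Λ z * (Matrix.of fun i j => derivWithin (fun t => Sg t i j) (Icc 0 1) z)
              + A z * Sg z - Sg z * Fw
              + (Matrix.of fun i j => ∫ ζ in (0 : ℝ)..z, (F z ζ * Sg ζ) i j)
            = A₀ z * Kw - C z) ∧
        Sg 0 = -(Eminus nm np * Kw) + Eplus nm np * (C₀ - Q₀ * Kw)) ∧
      ∀ Sg' : ℝ → Matrix (Fin (nm + np)) (Fin nw) ℝ,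
        ((∀ i j, ContDiffOn ℝ 1 (fun z => Sg' z i j) (Icc 0 1)) ∧
          (∀ z ∈ Ioc (0 : ℝ) 1,
            Λ z * (Matrix.of fun i j => derivWithin (fun t => Sg' t i j) (Icc 0 1) z)
                + A z * Sg' z - Sg' z * Fw
                + (Matrix.of fun i j => ∫ ζ in (0 : ℝ)..z, (F z ζ * Sg' ζ) i j)
              = A₀ z * Kw - C z) ∧
          Sg' 0 = -(Eminus nm np * Kw) + Eplus nm np * (C₀ - Q₀ * Kw)) →
        ∀ z ∈ Icc (0 : ℝ) 1, Sg' z = Sg z :=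
  local_decoupling_equations_unique_solution_general nm np nw Λ hΛdiag hΛC1 hΛsign A hA A₀ hA₀ F hF
    C hC Fw Kw Q₀ C₀
end

section
/- Let n₋ ≥ 1, n₊ ≥ 0, n = n₋ + n₊, n_w ≥ 1, n_v ≥ 1, n̄₋ ≥ 1. Let S ∈ ℝ^{n_v×n_v} have all eigenvalues purely imaginary, let b_y ∈ ℝ^{n_v}, and set S̃ = I_{n̄₋} ⊗ S and B̃_y = I_{n̄₋} ⊗ b_y. Let F̃_w ∈ ℝ^{n_w×n_w} be Hurwitz. Let Λ : [0,1] → ℝ^{n×n} be diagonal with continuously differentiable diagonal entries λ₁(z) ≥ … ≥ λ_{n₋}(z) > 0 > λ_{n₋+1}(z) ≥ … ≥ λ_n(z) for all z ∈ [0,1], let Ã₀ : [0,1] → ℝ^{n×n₋} be continuous with E₋ᵀÃ₀(z) strictly lower triangular for all z, and let Q₀ ∈ ℝ^{n₊×n₋}, B_w ∈ ℝ^{n_w×n₋}, C̃_w ∈ ℝ^{n̄₋×n_w}, C_{x,0}, C_{x,1} ∈ ℝ^{n̄₋×n} be constant and C̃_x : [0,1] → ℝ^{n̄₋×n} continuous.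 Then the decoupling equations of the multi-agent system have exactly one solution consisting of a continuously differentiable Π_x : [0,1] → ℝ^{n̄₋n_v×n} and a matrix Π_w ∈ ℝ^{n̄₋n_v×n_w}. -/
open Matrix Set
open scoped Kronecker

/-- A real square matrix is Hurwitz if every eigenvalue (root of the characteristic polynomial
of its complexification) has negative real part. -/
def IsHurwitzR {n : Type*} [Fintype n] [DecidableEq n] (M : Matrix n n ℝ) : Prop :=
  ∀ μ : ℂ, (M.map Complex.ofReal).charpoly.IsRoot μ → μ.re < 0

/-- The decoupling equations of the multi-agent system (conditions (i)–(iv)) for the unknowns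
`Px : [0,1] → ℝ^{n̄₋n_v×n}` and `Pw ∈ ℝ^{n̄₋n_v×n_w}`. -/
def DecouplingMAS (nm np nw nv nb : ℕ)
    (St : Matrix (Fin nb × Fin nv) (Fin nb × Fin nv) ℝ)
    (By : Matrix (Fin nb × Fin nv) (Fin nb) ℝ)
    (Fw : Matrix (Fin nw) (Fin nw) ℝ)
    (Λ : ℝ → Matrix (Fin (nm + np)) (Fin (nm + np)) ℝ)
    (A₀ : ℝ → Matrix (Fin (nm + np)) (Fin nm) ℝ)
    (Q₀ : Matrix (Fin np) (Fin nm) ℝ)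
    (Bw : Matrix (Fin nw) (Fin nm) ℝ)
    (Cw : Matrix (Fin nb) (Fin nw) ℝ)
    (Cx0 Cx1 : Matrix (Fin nb) (Fin (nm + np)) ℝ)
    (Cx : ℝ → Matrix (Fin nb) (Fin (nm + np)) ℝ)
    (Px : ℝ → Matrix (Fin nb × Fin nv) (Fin (nm + np)) ℝ)
    (Pw : Matrix (Fin nb × Fin nv) (Fin nw) ℝ) : Prop :=
  -- (i)
  St * Pw - Pw * Fw = -(By * Cw) ∧
  -- (ii)
  (∀ z ∈ Ioo (0 : ℝ) 1,
    (Matrix.of fun i j => derivWithin (fun t => (Px t * Λ t) i j) (Icc 0 1) z)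
        + St * Px z = -(By * Cx z)) ∧
  -- (iii)
  (Px 0 * Λ 0 * (Eplus nm np * Q₀ + Eminus nm np)
      - (Matrix.of fun i j => ∫ ζ in (0 : ℝ)..1, (Px ζ * A₀ ζ) i j)
    = Pw * Bw - By * Cx0 * (Eplus nm np * Q₀ + Eminus nm np)) ∧
  -- (iv)
  (Px 1 * Λ 1 * Eplus nm np = By * Cx1 * Eplus nm np)

/-!
The matrices `S̃ = I ⊗ S` (imaginary spectrum) and `F̃_w` (Hurwitz) have no common eigenvalue, so
the Sylvester equation (i) has exactly one solution `Π_w`: if `P` intertwines them, Cayley–Hamilton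
gives `P · χ_{S̃}(F̃_w) = 0`, and `χ_{S̃}(F̃_w)` is invertible by the spectral mapping theorem.

Since `Λ` is diagonal with nonvanishing entries, the columns `f_j` of `Π_x Λ` decouple (ii) into the
linear ODEs `f_j' = -λ_j⁻¹ S̃ f_j - (B̃_y C̃_x)_{·j}`, which an integrating factor `exp (α(z) S̃)`
solves uniquely from one prescribed value. For the columns of negative speed, (iv) prescribes
`f_j(1)`. For `j < n₋`, strict lower triangularity of `E₋ᵀ Ã₀` makes column `j` of (iii) prescribe
`f_j(0)` in terms of the columns `m > j` only. Solving the columns from the last one to the first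
gives a solution, and downward induction on `j` shows that it is the only one.
-/

open scoped Topology

section Sylvester

open Polynomial

theorem Matrix.charmatrix_one_kronecker {R o n : Type*} [CommRing R] [Fintype o] [DecidableEq o]
    [Fintype n] [DecidableEq n] (M : Matrix n n R) :
    charmatrix ((1 : Matrix o o R) ⊗ₖ M) = (1 : Matrix o o R[X]) ⊗ₖ charmatrix M := by
  ext ⟨k, i⟩ ⟨l, j⟩
  by_cases hkl : k = l <;> by_cases hij : i = j <;> simp [hkl, hij]

theorem Matrix.charpoly_one_kronecker {R o n : Type*} [CommRing R] [Fintype o] [DecidableEq o]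
    [Fintype n] [DecidableEq n] (M : Matrix n n R) :
    ((1 : Matrix o o R) ⊗ₖ M).charpoly = M.charpoly ^ Fintype.card o := by
  rw [charpoly, charmatrix_one_kronecker, det_kronecker, det_one, one_pow, one_mul, charpoly]

theorem Matrix.isRoot_charpoly_of_isRoot_charpoly_one_kronecker {R o n : Type*} [CommRing R]
    [IsDomain R] [Fintype o] [DecidableEq o] [Fintype n] [DecidableEq n] {M : Matrix n n R}
    {μ : R} (h : ((1 : Matrix o o R) ⊗ₖ M).charpoly.IsRoot μ) : M.charpoly.IsRoot μ := by
  rw [charpoly_one_kronecker, IsRoot, eval_pow] at h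
  exact (pow_eq_zero_iff'.mp h).1

theorem Matrix.map_one_kronecker {R S o n : Type*} [Semiring R] [Semiring S] [DecidableEq o]
    (f : R →+* S) (M : Matrix n n R) :
    ((1 : Matrix o o R) ⊗ₖ M).map f = (1 : Matrix o o S) ⊗ₖ M.map f := by
  ext ⟨k, i⟩ ⟨l, j⟩
  by_cases hkl : k = l <;> simp [hkl]

theorem Matrix.aeval_mul_eq_mul_aeval {R m l : Type*} [CommRing R] [Fintype m] [DecidableEq m]
    [Fintype l] [DecidableEq l] {A : Matrix m m R} {B : Matrix l l R} {P : Matrix m l R}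
    (h : A * P = P * B) (p : R[X]) : aeval A p * P = P * aeval B p := by
  have hpow : ∀ k : ℕ, A ^ k * P = P * B ^ k := by
    intro k
    induction k with
    | zero => simp
    | succ k ih =>
      rw [pow_succ, pow_succ, Matrix.mul_assoc, h, ← Matrix.mul_assoc, ih, Matrix.mul_assoc]
  simp only [aeval_eq_sum_range, Matrix.sum_mul, Matrix.mul_sum, Matrix.smul_mul, Matrix.mul_smul,
    hpow]

theorem Matrix.eq_zero_of_mul_eq_mul_of_disjoint_roots {m l : Type*} [Fintype m] [DecidableEq m]
    [Fintype l] [DecidableEq l] {A : Matrix m m ℂ} {B : Matrix l l ℂ} {P : Matrix m l ℂ}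
    (hAB : ∀ μ, A.charpoly.IsRoot μ → ¬ B.charpoly.IsRoot μ) (h : A * P = P * B) : P = 0 := by
  cases isEmpty_or_nonempty m
  · exact Subsingleton.elim _ _
  have hunit : IsUnit (aeval B A.charpoly).det := by
    rw [← isUnit_iff_isUnit_det, ← spectrum.zero_notMem_iff ℂ,
      spectrum.map_polynomial_aeval_of_degree_pos]
    · rintro ⟨μ, hμ, hμ0⟩
      exact hAB μ hμ0 (mem_spectrum_iff_isRoot_charpoly.mp hμ)
    · rw [charpoly_degree_eq_dim]
      exact_mod_cast Fintype.card_pos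
  have hP := aeval_mul_eq_mul_aeval h A.charpoly
  rw [aeval_self_charpoly, Matrix.zero_mul] at hP
  rw [← Matrix.mul_one P, ← mul_nonsing_inv _ hunit, ← Matrix.mul_assoc, ← hP, Matrix.zero_mul]

theorem Matrix.existsUnique_mul_sub_mul_eq {m l : Type*} [Fintype m] [DecidableEq m]
    [Fintype l] [DecidableEq l] {A : Matrix m m ℝ} {B : Matrix l l ℝ}
    (hAB : ∀ μ : ℂ, (A.map Complex.ofReal).charpoly.IsRoot μ →
      ¬ (B.map Complex.ofReal).charpoly.IsRoot μ)
    (C : Matrix m l ℝ) : ∃! P : Matrix m l ℝ, A * P - P * B = C := by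
  let L : Matrix m l ℝ →ₗ[ℝ] Matrix m l ℝ :=
    { toFun := fun P => A * P - P * B
      map_add' := fun P Q => by simp only [Matrix.mul_add, Matrix.add_mul]; abel
      map_smul' := fun r P => by simp [Matrix.mul_smul, Matrix.smul_mul, smul_sub] }
  have hinj : Function.Injective L := by
    rw [← LinearMap.ker_eq_bot, LinearMap.ker_eq_bot']
    intro P hP
    have hc : A.map Complex.ofRealHom * P.map Complex.ofRealHom
        = P.map Complex.ofRealHom * B.map Complex.ofRealHom := by
      simpa only [Matrix.map_mul] using congrArg (·.map Complex.ofRealHom) (sub_eq_zero.mp hP)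
    exact Matrix.map_injective Complex.ofReal_injective
      ((eq_zero_of_mul_eq_mul_of_disjoint_roots hAB hc).trans
        (Matrix.map_zero _ Complex.ofReal_zero).symm)
  exact Function.Bijective.existsUnique ⟨hinj, LinearMap.injective_iff_surjective.mp hinj⟩ C

end Sylvester

theorem eq_of_hasDerivAt_eq_zero_of_continuousOn_Icc {F : Type*} [NormedAddCommGroup F]
    [NormedSpace ℝ F] {f : ℝ → F} {a b : ℝ} (hf : ContinuousOn f (Icc a b))
    (hf' : ∀ x ∈ Ioo a b, HasDerivAt f 0 x) : ∀ x ∈ Icc a b, ∀ y ∈ Icc a b, f x = f y := by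
  intro x hx y hy
  obtain hab | hab := (hx.1.trans hx.2).eq_or_lt
  · rw [le_antisymm hx.2 (hab ▸ hx.1), le_antisymm hy.2 (hab ▸ hy.1)]
  have hmid : (a + b) / 2 ∈ Ioo a b := ⟨by linarith, by linarith⟩
  have hIoo : EqOn f (fun _ => f ((a + b) / 2)) (Ioo a b) := fun z hz =>
    isOpen_Ioo.is_const_of_deriv_eq_zero isPreconnected_Ioo
      (fun w hw => (hf' w hw).differentiableAt.differentiableWithinAt)
      (fun w hw => (hf' w hw).deriv) hz hmid
  have hIcc := hIoo.of_subset_closure hf continuousOn_const Ioo_subset_Icc_self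
    (closure_Ioo hab.ne).ge
  rw [hIcc hx, hIcc hy]

theorem ContinuousOn.exists_continuous_eqOn_Icc {β : Type*} [TopologicalSpace β] {f : ℝ → β}
    {a b : ℝ} (hab : a ≤ b) (hf : ContinuousOn f (Icc a b)) :
    ∃ f' : ℝ → β, Continuous f' ∧ EqOn f' f (Icc a b) :=
  ⟨IccExtend hab ((Icc a b).domRestrict f), continuous_IccExtend_iff.mpr hf.domRestrict,
    fun _ hx => IccExtend_of_mem hab _ hx⟩

section LinearODE

open NormedSpace

variable {E : Type*} [NormedAddCommGroup E] [NormedSpace ℝ E] [CompleteSpace E]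

-- `exp_add_of_commute` and `exp_continuous` are stated for normed `ℚ`-algebras.
noncomputable local instance : NormedAlgebra ℚ (E →L[ℝ] E) := .restrictScalars ℚ ℝ _

theorem exp_smul_mul_exp_neg_smul (T : E →L[ℝ] E) (s : ℝ) :
    exp (s • T) * exp (-s • T) = 1 := by
  rw [neg_smul, ← NormedSpace.exp_add_of_commute (Commute.refl _).neg_right, add_neg_cancel,
    NormedSpace.exp_zero]

theorem hasDerivAt_exp_smul_integral (T : E →L[ℝ] E) {c : ℝ → ℝ} (hc : Continuous c)
    (t₀ z : ℝ) :
    HasDerivAt (fun t => exp ((∫ s in t₀..t, c s) • T))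
      (c z • (T * exp ((∫ s in t₀..z, c s) • T))) z :=
  (hasDerivAt_exp_smul_const' T _).scomp z (hc.integral_hasStrictDerivAt t₀ z).hasDerivAt

theorem exists_contDiff_hasDerivAt_smul_add (T : E →L[ℝ] E) {c : ℝ → ℝ} {g : ℝ → E}
    (hc : Continuous c) (hg : Continuous g) (t₀ : ℝ) (y₀ : E) :
    ∃ y : ℝ → E, ContDiff ℝ 1 y ∧ y t₀ = y₀ ∧ ∀ z, HasDerivAt y (c z • T (y z) + g z) z := by
  set α : ℝ → ℝ := fun z => ∫ s in t₀..z, c s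
  have hα : Continuous α := continuous_iff_continuousAt.mpr fun z =>
    (hc.integral_hasStrictDerivAt t₀ z).hasDerivAt.continuousAt
  set h : ℝ → E := fun s => exp (-α s • T) (g s)
  have hh : Continuous h := (exp_continuous.comp (hα.neg.smul continuous_const)).clm_apply hg
  set y : ℝ → E := fun z => exp (α z • T) (y₀ + ∫ s in t₀..z, h s)
  have hy : ∀ z, HasDerivAt y (c z • T (y z) + g z) z := by
    intro z
    convert (hasDerivAt_exp_smul_integral T hc t₀ z).clm_apply
      ((hh.integral_hasStrictDerivAt t₀ z).hasDerivAt.const_add y₀) using 1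
    rw [_root_.smul_apply, mul_apply_eq_comp, ← mul_apply_eq_comp (exp _),
      exp_smul_mul_exp_neg_smul, one_apply_eq_self]
  refine ⟨y, contDiff_one_iff_deriv.mpr ⟨fun z => (hy z).differentiableAt, ?_⟩, ?_, hy⟩
  · have hyc : Continuous y := continuous_iff_continuousAt.mpr fun z => (hy z).continuousAt
    rw [funext fun z => (hy z).deriv]
    exact (hc.smul (T.continuous.comp hyc)).add hg
  · simp [y, α]

theorem exists_contDiffOn_hasDerivAt_smul_add (T : E →L[ℝ] E) {c : ℝ → ℝ} {g : ℝ → E}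
    {a b : ℝ} (hab : a ≤ b) (hc : ContinuousOn c (Icc a b)) (hg : ContinuousOn g (Icc a b))
    (t₀ : ℝ) (y₀ : E) :
    ∃ y : ℝ → E, ContDiffOn ℝ 1 y (Icc a b) ∧ y t₀ = y₀ ∧
      ∀ z ∈ Ioo a b, HasDerivAt y (c z • T (y z) + g z) z := by
  obtain ⟨c', hc', hcc'⟩ := hc.exists_continuous_eqOn_Icc hab
  obtain ⟨g', hg', hgg'⟩ := hg.exists_continuous_eqOn_Icc hab
  obtain ⟨y, hy, hy₀, hy'⟩ := exists_contDiff_hasDerivAt_smul_add T hc' hg' t₀ y₀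
  refine ⟨y, hy.contDiffOn, hy₀, fun z hz => ?_⟩
  rw [← hcc' (Ioo_subset_Icc_self hz), ← hgg' (Ioo_subset_Icc_self hz)]
  exact hy' z

theorem eqOn_of_hasDerivAt_smul_add (T : E →L[ℝ] E) {c : ℝ → ℝ} {g : ℝ → E}
    {a b t₀ : ℝ} (hc : ContinuousOn c (Icc a b)) {u v : ℝ → E} (ht₀ : t₀ ∈ Icc a b)
    (hu : ContinuousOn u (Icc a b)) (hv : ContinuousOn v (Icc a b))
    (hu' : ∀ z ∈ Ioo a b, HasDerivAt u (c z • T (u z) + g z) z)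
    (hv' : ∀ z ∈ Ioo a b, HasDerivAt v (c z • T (v z) + g z) z) (h : u t₀ = v t₀) :
    EqOn u v (Icc a b) := by
  obtain ⟨c', hc', hcc'⟩ := hc.exists_continuous_eqOn_Icc (ht₀.1.trans ht₀.2)
  replace hu' : ∀ z ∈ Ioo a b, HasDerivAt u (c' z • T (u z) + g z) z := fun z hz => by
    simpa only [hcc' (Ioo_subset_Icc_self hz)] using hu' z hz
  replace hv' : ∀ z ∈ Ioo a b, HasDerivAt v (c' z • T (v z) + g z) z := fun z hz => by
    simpa only [hcc' (Ioo_subset_Icc_self hz)] using hv' z hz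
  set α : ℝ → ℝ := fun z => ∫ s in t₀..z, (-c') s
  have hα : Continuous α := continuous_iff_continuousAt.mpr fun z =>
    (hc'.neg.integral_hasStrictDerivAt t₀ z).hasDerivAt.continuousAt
  set w : ℝ → E := fun z => exp (α z • T) (u z - v z)
  have hw : ∀ z ∈ Ioo a b, HasDerivAt w 0 z := by
    intro z hz
    convert (hasDerivAt_exp_smul_integral T hc'.neg t₀ z).clm_apply ((hu' z hz).sub (hv' z hz))
      using 1
    · rfl
    have hcomm : Commute T (exp (α z • T)) := ((Commute.refl T).smul_right _).exp_right
    rw [add_sub_add_right_eq_sub, ← smul_sub, ← map_sub, map_smul, ← mul_apply_eq_comp (exp _) T,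
      ← hcomm.eq, _root_.smul_apply, Pi.neg_apply, neg_smul, Pi.sub_apply, neg_add_cancel]
  intro z hz
  have hwz : w z = w t₀ :=
    eq_of_hasDerivAt_eq_zero_of_continuousOn_Icc
      ((exp_continuous.comp (hα.smul continuous_const)).continuousOn.clm_apply (hu.sub hv)) hw
      z hz t₀ ht₀
  have hinv := exp_smul_mul_exp_neg_smul T (-α z)
  rw [neg_neg] at hinv
  rw [← sub_eq_zero, ← one_apply_eq_self (F := E →L[ℝ] E) (u z - v z), ← hinv, mul_apply_eq_comp]
  simp [w, hwz, h]

end LinearODE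

section TriangularSystem

variable {E : Type*} [NormedAddCommGroup E] [NormedSpace ℝ E] {n : ℕ}

def IsTriangularOn (s : Set ℝ) (B : Fin n → (Fin n → ℝ → E) → E) : Prop :=
  ∀ j f f', (∀ m, j < m → EqOn (f m) (f' m) s) → B j f = B j f'

def SolvesTriangularBVP (T : E →L[ℝ] E) (c : Fin n → ℝ → ℝ) (g : Fin n → ℝ → E) (a b : ℝ)
    (t : Fin n → ℝ) (B : Fin n → (Fin n → ℝ → E) → E) (f : Fin n → ℝ → E) : Prop :=
  ∀ j, ContinuousOn (f j) (Icc a b) ∧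
    (∀ z ∈ Ioo a b, HasDerivAt (f j) (c j z • T (f j z) + g j z) z) ∧ f j (t j) = B j f

variable {T : E →L[ℝ] E} {c : Fin n → ℝ → ℝ} {g : Fin n → ℝ → E} {a b : ℝ} {t : Fin n → ℝ}
  {B : Fin n → (Fin n → ℝ → E) → E}

theorem exists_solvesTriangularBVP [CompleteSpace E] (hab : a ≤ b)
    (hc : ∀ j, ContinuousOn (c j) (Icc a b)) (hg : ∀ j, ContinuousOn (g j) (Icc a b))
    (hB : IsTriangularOn (Icc a b) B) :
    ∃ f, (∀ j, ContDiffOn ℝ 1 (f j) (Icc a b)) ∧ SolvesTriangularBVP T c g a b t B f := by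
  let Good (f : Fin n → ℝ → E) : Prop := ∀ j, ContDiffOn ℝ 1 (f j) (Icc a b) ∧
    ∀ z ∈ Ioo a b, HasDerivAt (f j) (c j z • T (f j z) + g j z) z
  suffices h : ∀ k : Fin (n + 1), ∃ f, Good f ∧ ∀ j : Fin n, k ≤ j.castSucc → f j (t j) = B j f by
    obtain ⟨f, hf, hBf⟩ := h 0
    exact ⟨f, fun j => (hf j).1, fun j => ⟨(hf j).1.continuousOn, (hf j).2, hBf j (Fin.zero_le _)⟩⟩
  intro k
  -- Going down from the last column, re-solve column `i` once the later columns are final.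
  induction k using Fin.reverseInduction with
  | last =>
    choose f hf using fun j => exists_contDiffOn_hasDerivAt_smul_add T hab (hc j) (hg j) 0 0
    exact ⟨f, fun j => ⟨(hf j).1, (hf j).2.2⟩,
      fun j hj => absurd hj (not_le.mpr j.castSucc_lt_last)⟩
  | cast i ih =>
    obtain ⟨f, hf, hBf⟩ := ih
    obtain ⟨y, hy, hyt, hy'⟩ :=
      exists_contDiffOn_hasDerivAt_smul_add T hab (hc i) (hg i) (t i) (B i f)
    have hBupd : ∀ j, i ≤ j → B j (Function.update f i y) = B j f := fun j hij =>
      hB j _ _ fun m hm x _ => by rw [Function.update_of_ne (hij.trans_lt hm).ne']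
    refine ⟨Function.update f i y, fun j => ?_, fun j hj => ?_⟩
    · rcases eq_or_ne j i with rfl | hji
      · simpa only [Function.update_self] using ⟨hy, hy'⟩
      · simpa only [Function.update_of_ne hji] using hf j
    · rw [Fin.castSucc_le_castSucc_iff] at hj
      rcases hj.eq_or_lt with rfl | hij
      · rw [hBupd i le_rfl, Function.update_self, hyt]
      · rw [hBupd j hij.le, Function.update_of_ne hij.ne',
          hBf j (Fin.succ_le_castSucc_iff.mpr hij)]

theorem SolvesTriangularBVP.eqOn [CompleteSpace E] (hc : ∀ j, ContinuousOn (c j) (Icc a b))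
    (ht : ∀ j, t j ∈ Icc a b) (hB : IsTriangularOn (Icc a b) B) {f f' : Fin n → ℝ → E}
    (hf : SolvesTriangularBVP T c g a b t B f) (hf' : SolvesTriangularBVP T c g a b t B f')
    (j : Fin n) : EqOn (f j) (f' j) (Icc a b) := by
  induction j using WellFoundedGT.induction with
  | _ j ih =>
    obtain ⟨hfc, hfd, hft⟩ := hf j
    obtain ⟨hfc', hfd', hft'⟩ := hf' j
    exact eqOn_of_hasDerivAt_smul_add T (hc j) (ht j) hfc hfc' hfd hfd'
      (by rw [hft, hft', hB j f f' ih])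

theorem SolvesTriangularBVP.congr (ht : ∀ j, t j ∈ Icc a b) (hB : IsTriangularOn (Icc a b) B)
    {f f' : Fin n → ℝ → E} (hf : SolvesTriangularBVP T c g a b t B f)
    (hff' : ∀ j, EqOn (f j) (f' j) (Icc a b)) : SolvesTriangularBVP T c g a b t B f' := by
  intro j
  obtain ⟨hfc, hfd, hft⟩ := hf j
  refine ⟨hfc.congr fun z hz => (hff' j hz).symm, fun z hz => ?_, ?_⟩
  · rw [← hff' j (Ioo_subset_Icc_self hz)]
    exact (hfd z hz).congr_of_eventuallyEq
      (Filter.eventually_of_mem (Icc_mem_nhds hz.1 hz.2) fun w hw => (hff' j hw).symm)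
  · rw [← hff' j (ht j), hft, hB j f f' fun m _ => hff' m]

end TriangularSystem

theorem Matrix.IsDiag.mul_apply_right {ι κ α : Type*} [Fintype κ]
    [NonUnitalNonAssocSemiring α] {M : Matrix ι κ α} {D : Matrix κ κ α} (hD : D.IsDiag)
    (i : ι) (j : κ) : (M * D) i j = M i j * D j j := by
  rw [mul_apply, Finset.sum_eq_single j (fun k _ hk => by rw [hD hk, mul_zero]) (by simp)]

theorem Eplus_apply (nm np : ℕ) (i : Fin (nm + np)) (k : Fin np) :
    Eplus nm np i k = if i = Fin.natAdd nm k then 1 else 0 := by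
  simp [Eplus, Fin.ext_iff]

theorem Eminus_apply (nm np : ℕ) (i : Fin (nm + np)) (j : Fin nm) :
    Eminus nm np i j = if i = Fin.castAdd np j then 1 else 0 := by
  simp [Eminus, Fin.ext_iff]

theorem mul_Eplus_apply {ι : Type*} {nm np : ℕ} (M : Matrix ι (Fin (nm + np)) ℝ) (i : ι)
    (k : Fin np) : (M * Eplus nm np) i k = M i (Fin.natAdd nm k) := by
  simp [mul_apply, Eplus_apply]

theorem mul_Eminus_apply {ι : Type*} {nm np : ℕ} (M : Matrix ι (Fin (nm + np)) ℝ) (i : ι)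
    (j : Fin nm) : (M * Eminus nm np) i j = M i (Fin.castAdd np j) := by
  simp [mul_apply, Eminus_apply]

theorem Eminus_transpose_mul_apply {ι : Type*} {nm np : ℕ} (M : Matrix (Fin (nm + np)) ι ℝ)
    (i : Fin nm) (j : ι) : ((Eminus nm np)ᵀ * M) i j = M (Fin.castAdd np i) j := by
  simp [mul_apply, Eminus_apply]

section Columns

variable {ι κ : Type*} {Λ : ℝ → Matrix κ κ ℝ}

-- For diagonal `Λ z`, the columns of `Px z * Λ z`: the unknowns of the decoupled transport ODEs.
def columnsOf (Λ : ℝ → Matrix κ κ ℝ) (Px : ℝ → Matrix ι κ ℝ) : κ → ℝ → ι → ℝ :=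
  fun j z i => Px z i j * Λ z j j

noncomputable def ofColumns (Λ : ℝ → Matrix κ κ ℝ) (f : κ → ℝ → ι → ℝ) : ℝ → Matrix ι κ ℝ :=
  fun z => of fun i j => f j z i / Λ z j j

theorem apply_eq_columnsOf_div (Px : ℝ → Matrix ι κ ℝ) {z : ℝ} {j : κ} (hΛ : Λ z j j ≠ 0)
    (i : ι) : Px z i j = columnsOf Λ Px j z i / Λ z j j :=
  (mul_div_cancel_right₀ _ hΛ).symm

theorem columnsOf_ofColumns {f : κ → ℝ → ι → ℝ} {z : ℝ} {j : κ} (hΛ : Λ z j j ≠ 0) :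
    columnsOf Λ (ofColumns Λ f) j z = f j z :=
  funext fun _ => div_mul_cancel₀ _ hΛ

theorem continuousOn_neg_inv_diag (hΛ : ∀ j, ContinuousOn (fun z => Λ z j j) (Icc 0 1))
    (hΛ0 : ∀ z ∈ Icc (0 : ℝ) 1, ∀ j, Λ z j j ≠ 0) (j : κ) :
    ContinuousOn (fun z => -(Λ z j j)⁻¹) (Icc 0 1) :=
  ((hΛ j).inv₀ fun z hz => hΛ0 z hz j).neg

theorem contDiffOn_columnsOf [Fintype ι] {Px : ℝ → Matrix ι κ ℝ}
    (hΛ : ∀ j, ContDiffOn ℝ 1 (fun z => Λ z j j) (Icc 0 1))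
    (hPx : ∀ i j, ContDiffOn ℝ 1 (fun z => Px z i j) (Icc 0 1)) (j : κ) :
    ContDiffOn ℝ 1 (columnsOf Λ Px j) (Icc 0 1) :=
  contDiffOn_pi.mpr fun i => (hPx i j).mul (hΛ j)

theorem contDiffOn_ofColumns [Fintype ι] {f : κ → ℝ → ι → ℝ}
    (hΛ : ∀ j, ContDiffOn ℝ 1 (fun z => Λ z j j) (Icc 0 1))
    (hΛ0 : ∀ z ∈ Icc (0 : ℝ) 1, ∀ j, Λ z j j ≠ 0) (hf : ∀ j, ContDiffOn ℝ 1 (f j) (Icc 0 1))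
    (i : ι) (j : κ) : ContDiffOn ℝ 1 (fun z => ofColumns Λ f z i j) (Icc 0 1) :=
  (contDiffOn_pi.mp (hf j) i).div (hΛ j) fun z hz => hΛ0 z hz j

theorem transport_iff_hasDerivAt [Fintype ι] [Fintype κ] {Px : ℝ → Matrix ι κ ℝ}
    {St : Matrix ι ι ℝ} {G : Matrix ι κ ℝ} {z : ℝ} (hz : z ∈ Ioo (0 : ℝ) 1)
    (hΛ : ∀ w ∈ Icc (0 : ℝ) 1, (Λ w).IsDiag) (hΛ0 : ∀ j, Λ z j j ≠ 0)
    (hd : ∀ j, DifferentiableAt ℝ (columnsOf Λ Px j) z) :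
    (of fun i j => derivWithin (fun t => (Px t * Λ t) i j) (Icc 0 1) z) + St * Px z = -G ↔
      ∀ j, HasDerivAt (columnsOf Λ Px j)
        (-(Λ z j j)⁻¹ • (St *ᵥ columnsOf Λ Px j z) + -Gᵀ j) z := by
  have hderiv : ∀ i j, derivWithin (fun t => (Px t * Λ t) i j) (Icc 0 1) z
      = deriv (columnsOf Λ Px j) z i := by
    intro i j
    have hnhds : Icc (0 : ℝ) 1 ∈ 𝓝 z := Icc_mem_nhds hz.1 hz.2
    rw [derivWithin_of_mem_nhds hnhds, deriv_pi fun i => differentiableAt_pi.mp (hd j) i]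
    exact Filter.EventuallyEq.deriv_eq
      (Filter.eventually_of_mem hnhds fun w hw => (hΛ w hw).mul_apply_right i j)
  have hSt : ∀ i j, (St * Px z) i j = (Λ z j j)⁻¹ * (St *ᵥ columnsOf Λ Px j z) i := by
    intro i j
    simp only [mul_apply, mulVec, dotProduct, Finset.mul_sum]
    refine Finset.sum_congr rfl fun k _ => ?_
    rw [apply_eq_columnsOf_div Px (hΛ0 j) k]
    ring
  have hiff : ∀ j v, HasDerivAt (columnsOf Λ Px j) v z ↔
      ∀ i, deriv (columnsOf Λ Px j) z i = v i :=
    fun j v => ⟨fun h i => by rw [h.deriv], fun h => funext h ▸ (hd j).hasDerivAt⟩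
  simp only [hiff, ← Matrix.ext_iff]
  rw [forall_comm]
  refine forall_congr' fun j => forall_congr' fun i => ?_
  simp only [Matrix.add_apply, of_apply, Matrix.neg_apply, hderiv, hSt, Pi.add_apply,
    Pi.smul_apply, Pi.neg_apply, smul_eq_mul, transpose_apply]
  constructor <;> intro h <;> linarith

end Columns

section BoundaryConditions

variable {ι : Type*} {nm np : ℕ} {Λ : ℝ → Matrix (Fin (nm + np)) (Fin (nm + np)) ℝ}
  {A₀ : ℝ → Matrix (Fin (nm + np)) (Fin nm) ℝ}

def boundaryPoint (nm np : ℕ) : Fin (nm + np) → ℝ :=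
  Fin.addCases (fun _ => 0) (fun _ => 1)

/- Column `j < n₋` of (iii), solved for the value at `0` of column `j`, and column `k` of (iv),
which prescribes the value at `1` of column `n₋ + k`. -/
noncomputable def boundaryValue (Λ : ℝ → Matrix (Fin (nm + np)) (Fin (nm + np)) ℝ)
    (A₀ : ℝ → Matrix (Fin (nm + np)) (Fin nm) ℝ) (Q₀ : Matrix (Fin np) (Fin nm) ℝ)
    (R : Matrix ι (Fin nm) ℝ) (H : Matrix ι (Fin (nm + np)) ℝ) :
    Fin (nm + np) → (Fin (nm + np) → ℝ → ι → ℝ) → ι → ℝ :=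
  Fin.addCases
    (fun j f i => R i j + (∫ ζ in (0 : ℝ)..1, ∑ m, f m ζ i / Λ ζ m m * A₀ ζ m j)
      - ∑ k, f (Fin.natAdd nm k) 0 i * Q₀ k j)
    (fun k _ i => H i (Fin.natAdd nm k))

theorem isTriangularOn_boundaryValue (Q₀ : Matrix (Fin np) (Fin nm) ℝ)
    (R : Matrix ι (Fin nm) ℝ) (H : Matrix ι (Fin (nm + np)) ℝ)
    (hA₀ : ∀ z ∈ Icc (0 : ℝ) 1, ∀ m j, m ≤ Fin.castAdd np j → A₀ z m j = 0) :
    IsTriangularOn (Icc 0 1) (boundaryValue Λ A₀ Q₀ R H) := by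
  intro j f f' h
  induction j using Fin.addCases with
  | right k => simp [boundaryValue]
  | left j =>
    simp only [boundaryValue, Fin.addCases_left]
    ext i
    congr 2
    · refine intervalIntegral.integral_congr fun ζ hζ => Finset.sum_congr rfl fun m _ => ?_
      rw [uIcc_of_le zero_le_one] at hζ
      obtain hm | hm := le_or_gt m (Fin.castAdd np j)
      · simp [hA₀ ζ hζ m j hm]
      · rw [h m hm hζ]
    · ext k
      rw [h _ (Fin.lt_def.mpr (by simp; omega)) (left_mem_Icc.mpr zero_le_one)]

theorem boundaryPoint_mem_Icc (j : Fin (nm + np)) : boundaryPoint nm np j ∈ Icc (0 : ℝ) 1 := by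
  induction j using Fin.addCases <;> simp [boundaryPoint]

theorem boundary_zero_iff [Fintype ι] {Px : ℝ → Matrix ι (Fin (nm + np)) ℝ}
    {Q₀ : Matrix (Fin np) (Fin nm) ℝ} {R : Matrix ι (Fin nm) ℝ} (H : Matrix ι (Fin (nm + np)) ℝ)
    (hΛ : ∀ z ∈ Icc (0 : ℝ) 1, (Λ z).IsDiag) (hΛ0 : ∀ z ∈ Icc (0 : ℝ) 1, ∀ j, Λ z j j ≠ 0) :
    Px 0 * Λ 0 * (Eplus nm np * Q₀ + Eminus nm np)
        - (of fun i j => ∫ ζ in (0 : ℝ)..1, (Px ζ * A₀ ζ) i j) = R ↔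
      ∀ j : Fin nm, columnsOf Λ Px (Fin.castAdd np j) 0
        = boundaryValue Λ A₀ Q₀ R H (Fin.castAdd np j) (columnsOf Λ Px) := by
  have hL : ∀ i j, (Px 0 * Λ 0 * (Eplus nm np * Q₀ + Eminus nm np)) i j
      = ∑ k, columnsOf Λ Px (Fin.natAdd nm k) 0 i * Q₀ k j
        + columnsOf Λ Px (Fin.castAdd np j) 0 i := by
    intro i j
    simp only [Matrix.mul_add, ← Matrix.mul_assoc, Matrix.add_apply,
      Matrix.mul_apply (M := Px 0 * Λ 0 * Eplus nm np) (N := Q₀), mul_Eplus_apply,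
      mul_Eminus_apply, (hΛ 0 (left_mem_Icc.mpr zero_le_one)).mul_apply_right, columnsOf]
  have hint : ∀ i j, ∫ ζ in (0 : ℝ)..1, (Px ζ * A₀ ζ) i j
      = ∫ ζ in (0 : ℝ)..1, ∑ m, columnsOf Λ Px m ζ i / Λ ζ m m * A₀ ζ m j := by
    intro i j
    refine intervalIntegral.integral_congr fun ζ hζ => ?_
    rw [uIcc_of_le zero_le_one] at hζ
    simp only [mul_apply]
    exact Finset.sum_congr rfl fun m _ => by rw [apply_eq_columnsOf_div Px (hΛ0 ζ hζ m)]
  simp only [← Matrix.ext_iff, funext_iff, boundaryValue, Fin.addCases_left, Matrix.sub_apply,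
    of_apply, hL, hint]
  rw [forall_comm]
  refine forall_congr' fun j => forall_congr' fun i => ?_
  constructor <;> intro h <;> linarith

theorem boundary_one_iff {Px : ℝ → Matrix ι (Fin (nm + np)) ℝ} {H : Matrix ι (Fin (nm + np)) ℝ}
    (hΛ : (Λ 1).IsDiag) :
    Px 1 * Λ 1 * Eplus nm np = H * Eplus nm np ↔
      ∀ k : Fin np, columnsOf Λ Px (Fin.natAdd nm k) 1 = fun i => H i (Fin.natAdd nm k) := by
  simp only [← Matrix.ext_iff, funext_iff, mul_Eplus_apply, hΛ.mul_apply_right, columnsOf]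
  exact forall_comm

end BoundaryConditions

section DecouplingEquations

variable {nm np nw nv nb : ℕ} {St : Matrix (Fin nb × Fin nv) (Fin nb × Fin nv) ℝ}
  {By : Matrix (Fin nb × Fin nv) (Fin nb) ℝ} {Fw : Matrix (Fin nw) (Fin nw) ℝ}
  {Λ : ℝ → Matrix (Fin (nm + np)) (Fin (nm + np)) ℝ} {A₀ : ℝ → Matrix (Fin (nm + np)) (Fin nm) ℝ}
  {Q₀ : Matrix (Fin np) (Fin nm) ℝ} {Bw : Matrix (Fin nw) (Fin nm) ℝ}
  {Cw : Matrix (Fin nb) (Fin nw) ℝ} {Cx0 Cx1 : Matrix (Fin nb) (Fin (nm + np)) ℝ}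
  {Cx : ℝ → Matrix (Fin nb) (Fin (nm + np)) ℝ}
  {Px : ℝ → Matrix (Fin nb × Fin nv) (Fin (nm + np)) ℝ} {Pw : Matrix (Fin nb × Fin nv) (Fin nw) ℝ}

theorem decouplingMAS_iff (hΛ : ∀ z ∈ Icc (0 : ℝ) 1, (Λ z).IsDiag)
    (hΛ0 : ∀ z ∈ Icc (0 : ℝ) 1, ∀ j, Λ z j j ≠ 0)
    (hΛC1 : ∀ j, ContDiffOn ℝ 1 (fun z => Λ z j j) (Icc 0 1))
    (hPx : ∀ i j, ContDiffOn ℝ 1 (fun z => Px z i j) (Icc 0 1)) :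
    DecouplingMAS nm np nw nv nb St By Fw Λ A₀ Q₀ Bw Cw Cx0 Cx1 Cx Px Pw ↔
      St * Pw - Pw * Fw = -(By * Cw) ∧
      SolvesTriangularBVP (LinearMap.toContinuousLinearMap (toLin' St))
        (fun j z => -(Λ z j j)⁻¹) (fun j z => -(By * Cx z)ᵀ j) 0 1 (boundaryPoint nm np)
        (boundaryValue Λ A₀ Q₀ (Pw * Bw - By * Cx0 * (Eplus nm np * Q₀ + Eminus nm np))
          (By * Cx1))
        (columnsOf Λ Px) := by
  have hcol := contDiffOn_columnsOf hΛC1 hPx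
  have htransport z (hz : z ∈ Ioo (0 : ℝ) 1) := transport_iff_hasDerivAt (St := St)
    (G := By * Cx z) hz hΛ (hΛ0 z (Ioo_subset_Icc_self hz)) fun j =>
      ((hcol j).differentiableOn one_ne_zero).differentiableAt (Icc_mem_nhds hz.1 hz.2)
  have hBC : (∀ j, columnsOf Λ Px j (boundaryPoint nm np j) = boundaryValue Λ A₀ Q₀
      (Pw * Bw - By * Cx0 * (Eplus nm np * Q₀ + Eminus nm np)) (By * Cx1) j (columnsOf Λ Px)) ↔
      (Px 0 * Λ 0 * (Eplus nm np * Q₀ + Eminus nm np)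
        - (of fun i j => ∫ ζ in (0 : ℝ)..1, (Px ζ * A₀ ζ) i j)
        = Pw * Bw - By * Cx0 * (Eplus nm np * Q₀ + Eminus nm np)) ∧
      Px 1 * Λ 1 * Eplus nm np = By * Cx1 * Eplus nm np := by
    rw [Fin.forall_fin_add, boundary_zero_iff (By * Cx1) hΛ hΛ0,
      boundary_one_iff (hΛ 1 (right_mem_Icc.mpr zero_le_one))]
    simp [boundaryPoint, boundaryValue]
  simp only [DecouplingMAS, SolvesTriangularBVP, forall_and, ← hBC,
    fun j => (hcol j).continuousOn, true_and]
  exact and_congr_right' (and_congr_left' ⟨fun h j z hz => (htransport z hz).mp (h z hz) j,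
    fun h z hz => (htransport z hz).mpr fun j => h j z hz⟩)

theorem exists_decouplingMAS (hΛ : ∀ z ∈ Icc (0 : ℝ) 1, (Λ z).IsDiag)
    (hΛ0 : ∀ z ∈ Icc (0 : ℝ) 1, ∀ j, Λ z j j ≠ 0)
    (hΛC1 : ∀ j, ContDiffOn ℝ 1 (fun z => Λ z j j) (Icc 0 1))
    (hA₀ : ∀ z ∈ Icc (0 : ℝ) 1, ∀ m j, m ≤ Fin.castAdd np j → A₀ z m j = 0)
    (hCx : ∀ i j, ContinuousOn (fun z => Cx z i j) (Icc 0 1))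
    (hPw : St * Pw - Pw * Fw = -(By * Cw)) :
    ∃ Px, (∀ i j, ContDiffOn ℝ 1 (fun z => Px z i j) (Icc 0 1)) ∧
      DecouplingMAS nm np nw nv nb St By Fw Λ A₀ Q₀ Bw Cw Cx0 Cx1 Cx Px Pw := by
  have hg j : ContinuousOn (fun z => -(By * Cx z)ᵀ j) (Icc 0 1) :=
    continuousOn_pi.mpr fun i => by
      simp only [Pi.neg_apply, transpose_apply, mul_apply]
      exact (continuousOn_finsetSum _ fun k _ => continuousOn_const.mul (hCx k j)).neg
  have hB := isTriangularOn_boundaryValue (Λ := Λ) Q₀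
    (Pw * Bw - By * Cx0 * (Eplus nm np * Q₀ + Eminus nm np)) (By * Cx1) hA₀
  obtain ⟨f, hf, hsol⟩ := exists_solvesTriangularBVP
    (T := LinearMap.toContinuousLinearMap (toLin' St)) (t := boundaryPoint nm np) zero_le_one
    (continuousOn_neg_inv_diag (fun j => (hΛC1 j).continuousOn) hΛ0) hg hB
  have hPx := contDiffOn_ofColumns hΛC1 hΛ0 hf
  refine ⟨ofColumns Λ f, hPx, (decouplingMAS_iff hΛ hΛ0 hΛC1 hPx).mpr ⟨hPw, ?_⟩⟩
  exact hsol.congr boundaryPoint_mem_Icc hB fun j z hz => (columnsOf_ofColumns (hΛ0 z hz j)).symm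

theorem DecouplingMAS.eqOn (hΛ : ∀ z ∈ Icc (0 : ℝ) 1, (Λ z).IsDiag)
    (hΛ0 : ∀ z ∈ Icc (0 : ℝ) 1, ∀ j, Λ z j j ≠ 0)
    (hΛC1 : ∀ j, ContDiffOn ℝ 1 (fun z => Λ z j j) (Icc 0 1))
    (hA₀ : ∀ z ∈ Icc (0 : ℝ) 1, ∀ m j, m ≤ Fin.castAdd np j → A₀ z m j = 0)
    {Px' : ℝ → Matrix (Fin nb × Fin nv) (Fin (nm + np)) ℝ}
    (hPx : ∀ i j, ContDiffOn ℝ 1 (fun z => Px z i j) (Icc 0 1))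
    (hPx' : ∀ i j, ContDiffOn ℝ 1 (fun z => Px' z i j) (Icc 0 1))
    (hD : DecouplingMAS nm np nw nv nb St By Fw Λ A₀ Q₀ Bw Cw Cx0 Cx1 Cx Px Pw)
    (hD' : DecouplingMAS nm np nw nv nb St By Fw Λ A₀ Q₀ Bw Cw Cx0 Cx1 Cx Px' Pw) :
    EqOn Px Px' (Icc 0 1) := by
  have hcol := ((decouplingMAS_iff hΛ hΛ0 hΛC1 hPx).mp hD).2.eqOn
    (continuousOn_neg_inv_diag (fun j => (hΛC1 j).continuousOn) hΛ0) boundaryPoint_mem_Icc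
    (isTriangularOn_boundaryValue Q₀ _ _ hA₀) ((decouplingMAS_iff hΛ hΛ0 hΛC1 hPx').mp hD').2
  intro z hz
  ext i j
  rw [apply_eq_columnsOf_div Px (hΛ0 z hz j), apply_eq_columnsOf_div Px' (hΛ0 z hz j),
    hcol j hz]

end DecouplingEquations

theorem decouplingMAS_unique_solution_general
    (nm np nw nv nb : ℕ)
    (S : Matrix (Fin nv) (Fin nv) ℝ)
    (hS : ∀ μ : ℂ, (S.map Complex.ofReal).charpoly.IsRoot μ → μ.re = 0)
    (St : Matrix (Fin nb × Fin nv) (Fin nb × Fin nv) ℝ)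
    (hSt : St = (1 : Matrix (Fin nb) (Fin nb) ℝ) ⊗ₖ S)
    (By : Matrix (Fin nb × Fin nv) (Fin nb) ℝ)
    (Fw : Matrix (Fin nw) (Fin nw) ℝ) (hFw : IsHurwitzR Fw)
    (Λ : ℝ → Matrix (Fin (nm + np)) (Fin (nm + np)) ℝ)
    (hΛdiag : ∀ z ∈ Icc (0 : ℝ) 1, (Λ z).IsDiag)
    (hΛC1 : ∀ i j, ContDiffOn ℝ 1 (fun z => Λ z i j) (Icc 0 1))
    (hΛsign : ∀ z ∈ Icc (0 : ℝ) 1, ∀ i : Fin (nm + np),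
      ((i : ℕ) < nm → 0 < Λ z i i) ∧ (nm ≤ (i : ℕ) → Λ z i i < 0))
    (A₀ : ℝ → Matrix (Fin (nm + np)) (Fin nm) ℝ)
    (hA₀tri : ∀ z ∈ Icc (0 : ℝ) 1, ∀ i j : Fin nm, i ≤ j → ((Eminus nm np)ᵀ * A₀ z) i j = 0)
    (Q₀ : Matrix (Fin np) (Fin nm) ℝ)
    (Bw : Matrix (Fin nw) (Fin nm) ℝ)
    (Cw : Matrix (Fin nb) (Fin nw) ℝ)
    (Cx0 Cx1 : Matrix (Fin nb) (Fin (nm + np)) ℝ)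
    (Cx : ℝ → Matrix (Fin nb) (Fin (nm + np)) ℝ)
    (hCx : ∀ i j, ContinuousOn (fun z => Cx z i j) (Icc 0 1)) :
    ∃ (Px : ℝ → Matrix (Fin nb × Fin nv) (Fin (nm + np)) ℝ)
      (Pw : Matrix (Fin nb × Fin nv) (Fin nw) ℝ),
      ((∀ i j, ContDiffOn ℝ 1 (fun z => Px z i j) (Icc 0 1)) ∧
        DecouplingMAS nm np nw nv nb St By Fw Λ A₀ Q₀ Bw Cw Cx0 Cx1 Cx Px Pw) ∧
      ∀ (Px' : ℝ → Matrix (Fin nb × Fin nv) (Fin (nm + np)) ℝ)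
        (Pw' : Matrix (Fin nb × Fin nv) (Fin nw) ℝ),
        ((∀ i j, ContDiffOn ℝ 1 (fun z => Px' z i j) (Icc 0 1)) ∧
          DecouplingMAS nm np nw nv nb St By Fw Λ A₀ Q₀ Bw Cw Cx0 Cx1 Cx Px' Pw') →
        (∀ z ∈ Icc (0 : ℝ) 1, Px' z = Px z) ∧ Pw' = Pw := by
  have hΛjj j : ContDiffOn ℝ 1 (fun z => Λ z j j) (Icc 0 1) := hΛC1 j j
  have hΛ0 : ∀ z ∈ Icc (0 : ℝ) 1, ∀ j, Λ z j j ≠ 0 := fun z hz j =>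
    (lt_or_ge (j : ℕ) nm).elim (fun h => ((hΛsign z hz j).1 h).ne') fun h =>
      ((hΛsign z hz j).2 h).ne
  have hA₀ : ∀ z ∈ Icc (0 : ℝ) 1, ∀ m j, m ≤ Fin.castAdd np j → A₀ z m j = 0 := by
    intro z hz m j hmj
    simpa [Eminus_transpose_mul_apply] using
      hA₀tri z hz ⟨m, (Fin.le_def.mp hmj).trans_lt j.2⟩ j hmj
  have hdisj : ∀ μ : ℂ, (St.map Complex.ofReal).charpoly.IsRoot μ →
      ¬ (Fw.map Complex.ofReal).charpoly.IsRoot μ := fun μ hμ hμ' =>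
    (hFw μ hμ').ne (hS μ (isRoot_charpoly_of_isRoot_charpoly_one_kronecker (o := Fin nb)
      (map_one_kronecker (o := Fin nb) Complex.ofRealHom S ▸ hSt ▸ hμ)))
  obtain ⟨Pw, hPw, hPw_unique⟩ := existsUnique_mul_sub_mul_eq hdisj (-(By * Cw))
  obtain ⟨Px, hPx, hD⟩ := exists_decouplingMAS hΛdiag hΛ0 hΛjj hA₀ hCx hPw
  refine ⟨Px, Pw, ⟨hPx, hD⟩, fun Px' Pw' ⟨hPx', hD'⟩ => ?_⟩
  obtain rfl := hPw_unique Pw' hD'.1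
  exact ⟨fun z hz => DecouplingMAS.eqOn hΛdiag hΛ0 hΛjj hA₀ hPx' hPx hD' hD hz, rfl⟩

/-- the decoupling equations of the multi-agent system have exactly one solution
`(Π_x, Π_w)` with `Π_x` continuously differentiable. -/
theorem decouplingMAS_unique_solution
    (nm np nw nv nb : ℕ) (hnm : 1 ≤ nm) (hnw : 1 ≤ nw) (hnv : 1 ≤ nv) (hnb : 1 ≤ nb)
    (S : Matrix (Fin nv) (Fin nv) ℝ)
    (hS : ∀ μ : ℂ, (S.map Complex.ofReal).charpoly.IsRoot μ → μ.re = 0)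
    (by_ : Fin nv → ℝ)
    (St : Matrix (Fin nb × Fin nv) (Fin nb × Fin nv) ℝ)
    (hSt : St = (1 : Matrix (Fin nb) (Fin nb) ℝ) ⊗ₖ S)
    (By : Matrix (Fin nb × Fin nv) (Fin nb) ℝ)
    (hBy : By = Matrix.of fun ki j => if ki.1 = j then by_ ki.2 else 0)
    (Fw : Matrix (Fin nw) (Fin nw) ℝ) (hFw : IsHurwitzR Fw)
    (Λ : ℝ → Matrix (Fin (nm + np)) (Fin (nm + np)) ℝ)
    (hΛdiag : ∀ z ∈ Icc (0 : ℝ) 1, (Λ z).IsDiag)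
    (hΛC1 : ∀ i j, ContDiffOn ℝ 1 (fun z => Λ z i j) (Icc 0 1))
    (hΛsorted : ∀ z ∈ Icc (0 : ℝ) 1, ∀ i j : Fin (nm + np), i ≤ j → Λ z j j ≤ Λ z i i)
    (hΛsign : ∀ z ∈ Icc (0 : ℝ) 1, ∀ i : Fin (nm + np),
      ((i : ℕ) < nm → 0 < Λ z i i) ∧ (nm ≤ (i : ℕ) → Λ z i i < 0))
    (A₀ : ℝ → Matrix (Fin (nm + np)) (Fin nm) ℝ)
    (hA₀cont : ∀ i j, ContinuousOn (fun z => A₀ z i j) (Icc 0 1))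
    (hA₀tri : ∀ z ∈ Icc (0 : ℝ) 1, ∀ i j : Fin nm, i ≤ j → ((Eminus nm np)ᵀ * A₀ z) i j = 0)
    (Q₀ : Matrix (Fin np) (Fin nm) ℝ)
    (Bw : Matrix (Fin nw) (Fin nm) ℝ)
    (Cw : Matrix (Fin nb) (Fin nw) ℝ)
    (Cx0 Cx1 : Matrix (Fin nb) (Fin (nm + np)) ℝ)
    (Cx : ℝ → Matrix (Fin nb) (Fin (nm + np)) ℝ)
    (hCx : ∀ i j, ContinuousOn (fun z => Cx z i j) (Icc 0 1)) :
    ∃ (Px : ℝ → Matrix (Fin nb × Fin nv) (Fin (nm + np)) ℝ)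
      (Pw : Matrix (Fin nb × Fin nv) (Fin nw) ℝ),
      ((∀ i j, ContDiffOn ℝ 1 (fun z => Px z i j) (Icc 0 1)) ∧
        DecouplingMAS nm np nw nv nb St By Fw Λ A₀ Q₀ Bw Cw Cx0 Cx1 Cx Px Pw) ∧
      ∀ (Px' : ℝ → Matrix (Fin nb × Fin nv) (Fin (nm + np)) ℝ)
        (Pw' : Matrix (Fin nb × Fin nv) (Fin nw) ℝ),
        ((∀ i j, ContDiffOn ℝ 1 (fun z => Px' z i j) (Icc 0 1)) ∧
          DecouplingMAS nm np nw nv nb St By Fw Λ A₀ Q₀ Bw Cw Cx0 Cx1 Cx Px' Pw') →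
        (∀ z ∈ Icc (0 : ℝ) 1, Px' z = Px z) ∧ Pw' = Pw :=
  decouplingMAS_unique_solution_general nm np nw nv nb S hS St hSt By Fw hFw Λ hΛdiag hΛC1 hΛsign A₀
    hA₀tri Q₀ Bw Cw Cx0 Cx1 Cx hCx
end

section
/- Let n₋ ≥ 1, n₊ ≥ 0, n = n₋ + n₊, let Λ : [0,1] → ℝ^{n×n} be diagonal with continuous nonvanishing diagonal entries, let μ ∈ ℂ, and define the diagonal complex matrix Ψ(z,ζ) = Λ(ζ)Λ(z)^{-1}·exp(−μ∫_ζ^z Λ(η)^{-1} dη) for z, ζ ∈ [0,1]. Let Ã₀ : [0,1] → ℝ^{n×n₋} be continuous such that E₋ᵀÃ₀(z) is strictly lower triangular for all z ∈ [0,1]. Then the matrix M₁ = E₋ᵀ( Ψ(0,1)Λ(0)E₋ − ∫₀¹ Ψ(ζ,1)Ã₀(ζ) dζ ) ∈ ℂ^{n₋×n₋} is lower triangular with nonzero diagonal entries, and hence invertible. -/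
open Matrix Set

/-- `E₋ = [I_{n₋}; 0]` as a complex matrix. -/
def EminusC (nm np : ℕ) : Matrix (Fin (nm + np)) (Fin nm) ℂ :=
  Matrix.of fun i j => if (i : ℕ) = (j : ℕ) then 1 else 0

lemma EminusC_transpose_mul {nm np : ℕ} (X : Matrix (Fin (nm + np)) (Fin nm) ℂ)
    (i j : Fin nm) : ((EminusC nm np)ᵀ * X) i j = X (Fin.castAdd np i) j := by
  rw [Matrix.mul_apply, Finset.sum_eq_single (Fin.castAdd np i)]
  · simp [EminusC]
  · intro k _ hk
    have : (k : ℕ) ≠ (i : ℕ) := by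
      intro h
      exact hk (Fin.ext (by simpa using h))
    simp [EminusC, this]
  · simp

lemma mul_EminusC {nm np : ℕ} (X : Matrix (Fin (nm + np)) (Fin (nm + np)) ℂ)
    (i : Fin (nm + np)) (j : Fin nm) :
    (X * EminusC nm np) i j = X i (Fin.castAdd np j) := by
  rw [Matrix.mul_apply, Finset.sum_eq_single (Fin.castAdd np j)]
  · simp [EminusC]
  · intro k _ hk
    have : (k : ℕ) ≠ (j : ℕ) := by
      intro h
      exact hk (Fin.ext (by simpa using h))
    simp [EminusC, this]
  · simp

/-- the matrix `M₁ = E₋ᵀ(Ψ(0,1)Λ(0)E₋ − ∫₀¹ Ψ(ζ,1)Ã₀(ζ) dζ)` is lower triangular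
with nonzero diagonal entries, hence invertible. -/
theorem M1_lower_triangular_invertible
    (nm np : ℕ) (hnm : 1 ≤ nm)
    (Λ : ℝ → Matrix (Fin (nm + np)) (Fin (nm + np)) ℝ)
    (hΛdiag : ∀ z ∈ Icc (0 : ℝ) 1, (Λ z).IsDiag)
    (hΛcont : ∀ i j, ContinuousOn (fun z => Λ z i j) (Icc 0 1))
    (hΛne : ∀ z ∈ Icc (0 : ℝ) 1, ∀ i, Λ z i i ≠ 0)
    (μ : ℂ)
    (Ψ : ℝ → ℝ → Matrix (Fin (nm + np)) (Fin (nm + np)) ℂ)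
    (hΨ : ∀ z ζ, Ψ z ζ = Matrix.diagonal fun i =>
      ((Λ ζ i i : ℝ) : ℂ) * ((Λ z i i : ℝ) : ℂ)⁻¹ *
        Complex.exp (-μ * ((∫ η in ζ..z, (Λ η i i)⁻¹ : ℝ) : ℂ)))
    (A₀ : ℝ → Matrix (Fin (nm + np)) (Fin nm) ℝ)
    (hA₀cont : ∀ i j, ContinuousOn (fun z => A₀ z i j) (Icc 0 1))
    (hA₀tri : ∀ z ∈ Icc (0 : ℝ) 1, ∀ i j : Fin nm, i ≤ j →
      ((EminusC nm np)ᵀ * (A₀ z).map Complex.ofReal) i j = 0)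
    (M₁ : Matrix (Fin nm) (Fin nm) ℂ)
    (hM₁ : M₁ = (EminusC nm np)ᵀ *
      (Ψ 0 1 * (Λ 0).map Complex.ofReal * EminusC nm np
        - Matrix.of fun i j => ∫ ζ in (0 : ℝ)..1, (Ψ ζ 1 * (A₀ ζ).map Complex.ofReal) i j)) :
    (∀ i j : Fin nm, i < j → M₁ i j = 0) ∧ (∀ i : Fin nm, M₁ i i ≠ 0) ∧ IsUnit M₁ := by
  have h0 : (0 : ℝ) ∈ Icc (0 : ℝ) 1 := ⟨le_refl _, zero_le_one⟩
  have h1 : (1 : ℝ) ∈ Icc (0 : ℝ) 1 := ⟨zero_le_one, le_refl _⟩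
  -- the integral term vanishes for i ≤ j
  have hint : ∀ i j : Fin nm, i ≤ j →
      (∫ ζ in (0 : ℝ)..1, (Ψ ζ 1 * (A₀ ζ).map Complex.ofReal) (Fin.castAdd np i) j) = 0 := by
    intro i j hij
    have : EqOn (fun ζ => (Ψ ζ 1 * (A₀ ζ).map Complex.ofReal) (Fin.castAdd np i) j)
        (fun _ => (0 : ℂ)) (uIcc (0 : ℝ) 1) := by
      intro ζ hζ
      rw [uIcc_of_le zero_le_one] at hζ
      have hA := hA₀tri ζ hζ i j hij
      rw [EminusC_transpose_mul] at hA
      simp only [hΨ, Matrix.diagonal_mul, hA, mul_zero]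
    rw [intervalIntegral.integral_congr this, intervalIntegral.integral_const, smul_zero]
  -- entry formula
  have key : ∀ i j : Fin nm, i ≤ j → M₁ i j =
      (Ψ 0 1 * (Λ 0).map Complex.ofReal) (Fin.castAdd np i) (Fin.castAdd np j) := by
    intro i j hij
    rw [hM₁, EminusC_transpose_mul, Matrix.sub_apply, Matrix.of_apply, hint i j hij, sub_zero,
      mul_EminusC]
  have hoff : ∀ i j : Fin nm, i < j → M₁ i j = 0 := by
    intro i j hij
    rw [key i j hij.le]
    have hne : Fin.castAdd np i ≠ Fin.castAdd np j := by
      intro h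
      exact hij.ne (Fin.ext (by simpa using congrArg Fin.val h))
    rw [hΨ, Matrix.diagonal_mul, Matrix.map_apply, hΛdiag 0 h0 hne]
    simp
  have hdiag : ∀ i : Fin nm, M₁ i i ≠ 0 := by
    intro i
    rw [key i i le_rfl, hΨ, Matrix.diagonal_mul, Matrix.map_apply]
    have h0ne : ((Λ 0 (Fin.castAdd np i) (Fin.castAdd np i) : ℝ) : ℂ) ≠ 0 :=
      Complex.ofReal_ne_zero.mpr (hΛne 0 h0 _)
    have h1ne : ((Λ 1 (Fin.castAdd np i) (Fin.castAdd np i) : ℝ) : ℂ) ≠ 0 :=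
      Complex.ofReal_ne_zero.mpr (hΛne 1 h1 _)
    exact mul_ne_zero (mul_ne_zero (mul_ne_zero h1ne (inv_ne_zero h0ne))
      (Complex.exp_ne_zero _)) h0ne
  refine ⟨hoff, hdiag, ?_⟩
  have htri : M₁.BlockTriangular OrderDual.toDual := by
    intro i j hij
    exact hoff i j hij
  rw [Matrix.isUnit_iff_isUnit_det, isUnit_iff_ne_zero, Matrix.det_of_lowerTriangular M₁ htri]
  exact Finset.prod_ne_zero_iff.mpr fun i _ => hdiag i
end

section
/- Let S ∈ ℝ^{m×m}, B ∈ ℝ^{m×p}, a > 0, κ > 0, and let P ∈ ℝ^{m×m} be a symmetric positive definite matrix satisfying the algebraic Riccati equation SᵀP + PS − 2κPBBᵀP + aI = 0. Let H ∈ ℝ^{N×N} be a matrix all of whose eigenvalues λ ∈ ℂ satisfy Re λ ≥ κ, and set K = BᵀP. Then the matrix I_N ⊗ S − H ⊗ (BK) ∈ ℝ^{Nm×Nm} is Hurwitz. -/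
/-!
An eigenvector of `1 ⊗ S - H ⊗ B K` is `vec X` for a nonzero `X` with `S X - B K X Hᵀ = μ X`.
Pushing a suitable generalized eigenvector `w` of `Hᵀ`, for an eigenvalue `λ` of `H`, through `X`
gives `X w ≠ 0` with `X Hᵀ w = λ X w`, so `μ` is an eigenvalue of `S - λ B K`. For
`K = Bᵀ P` the Riccati equation makes `P` a common Lyapunov matrix of all these closed loops:
`(S - λ B K)ᴴ P + P (S - λ B K) = -a I - 2 (Re λ - κ) Kᵀ K`, which is negative definite as
soon as `Re λ ≥ κ`, and then `Re μ < 0`.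
-/

open Matrix
open scoped Kronecker

open scoped ComplexOrder

theorem Nat.exists_and_not_succ_of_not {p : ℕ → Prop} (h₀ : p 0) {k : ℕ} (hk : ¬p k) :
    ∃ j, p j ∧ ¬p (j + 1) := by
  induction k with
  | zero => exact absurd h₀ hk
  | succ k ih =>
    by_cases hpk : p k
    · exact ⟨k, hpk, hk⟩
    · exact ih hpk

/-- Some generalized eigenvector `x` of `f` is not killed by `g`; the last vector of the chain
`x, (f - μ) x, (f - μ)² x, …` that `g` does not kill is the witness. -/
theorem Module.End.exists_hasEigenvalue_map_apply_eq_smul {K V W : Type*} [Field K]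
    [IsAlgClosed K] [AddCommGroup V] [Module K V] [FiniteDimensional K V] [AddCommGroup W]
    [Module K W] (f : End K V) {g : V →ₗ[K] W} (hg : g ≠ 0) :
    ∃ μ x, f.HasEigenvalue μ ∧ g x ≠ 0 ∧ g (f x) = μ • g x := by
  obtain ⟨μ, hμ⟩ : ∃ μ, ¬f.maxGenEigenspace μ ≤ LinearMap.ker g := by
    by_contra! h
    refine hg (LinearMap.ker_eq_top.mp (top_le_iff.mp ?_))
    rw [← f.iSup_maxGenEigenspace_eq_top]
    exact iSup_le h
  obtain ⟨x, hx, hgx⟩ := SetLike.not_le_iff_exists.mp hμ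
  obtain ⟨k, hk⟩ := (f.mem_maxGenEigenspace μ x).mp hx
  obtain ⟨j, hj, hj₁⟩ := Nat.exists_and_not_succ_of_not
    (p := fun j ↦ g (((f - μ • 1) ^ j) x) ≠ 0) (k := k) (by simpa using hgx) (by simp [hk])
  refine ⟨μ, _, ?_, hj, ?_⟩
  · exact HasUnifEigenvalue.lt zero_lt_one (k := ⊤)
      ((Submodule.ne_bot_iff _).mpr ⟨x, hx, fun h ↦ hgx (by simp [h])⟩)
  · simpa [pow_succ', sub_eq_zero] using hj₁

namespace Matrix

theorem isRoot_charpoly_iff_exists_mulVec_eq_smul {K n : Type*} [Field K] [Fintype n]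
    [DecidableEq n] (M : Matrix n n K) (μ : K) :
    M.charpoly.IsRoot μ ↔ ∃ v ≠ 0, M *ᵥ v = μ • v := by
  rw [← charpoly_toLin', ← Module.End.hasEigenvalue_iff_isRoot_charpoly,
    Module.End.hasEigenvalue_iff]
  simp [Submodule.ne_bot_iff, and_comm]

theorem exists_isRoot_charpoly_of_isRoot_charpoly_one_kronecker_sub_kronecker
    {K m n : Type*} [Field K] [IsAlgClosed K] [Fintype m] [DecidableEq m] [Fintype n]
    [DecidableEq n] (A B : Matrix m m K) (C : Matrix n n K) {μ : K}
    (hμ : (1 ⊗ₖ A - C ⊗ₖ B).charpoly.IsRoot μ) :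
    ∃ lam, C.charpoly.IsRoot lam ∧ (A - lam • B).charpoly.IsRoot μ := by
  obtain ⟨v, hv, hMv⟩ := (isRoot_charpoly_iff_exists_mulVec_eq_smul _ _).mp hμ
  obtain ⟨X, rfl⟩ := vec_bijective.surjective v
  have hX : A * X - B * X * Cᵀ = μ • X := by
    rwa [sub_mulVec, kronecker_mulVec_vec, kronecker_mulVec_vec, transpose_one, Matrix.mul_one,
      ← vec_sub, ← vec_smul, vec_inj] at hMv
  obtain ⟨lam, w, hlam, hXw, hXCw⟩ :=
    Module.End.exists_hasEigenvalue_map_apply_eq_smul (toLin' Cᵀ)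
      ((LinearEquiv.map_ne_zero_iff toLin').mpr (by simpa [vec_eq_zero_iff] using hv))
  simp only [toLin'_apply] at hXw hXCw
  refine ⟨lam, ?_, (isRoot_charpoly_iff_exists_mulVec_eq_smul _ _).mpr ⟨X *ᵥ w, hXw, ?_⟩⟩
  · rwa [Module.End.hasEigenvalue_iff_isRoot_charpoly, charpoly_toLin', charpoly_transpose]
      at hlam
  · calc (A - lam • B) *ᵥ (X *ᵥ w) = (A * X - B * X * Cᵀ) *ᵥ w := by
          simp [sub_mulVec, ← mulVec_mulVec, hXCw, mulVec_smul, smul_mulVec]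
      _ = μ • X *ᵥ w := by rw [hX, smul_mulVec]

section Complexification

variable {l m n o : Type*}

@[simp]
theorem map_ofReal_mul [Fintype m] (A : Matrix l m ℝ) (B : Matrix m n ℝ) :
    (A * B).map Complex.ofReal = A.map Complex.ofReal * B.map Complex.ofReal :=
  Matrix.map_mul (f := Complex.ofRealHom)

@[simp]
theorem map_ofReal_transpose (A : Matrix m n ℝ) :
    Aᵀ.map Complex.ofReal = (A.map Complex.ofReal)ᴴ := by
  rw [← conjTranspose_eq_transpose_of_trivial,
    conjTranspose_map _ fun _ ↦ (Complex.conj_ofReal _).symm]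

@[simp]
theorem map_ofReal_kronecker (A : Matrix l m ℝ) (B : Matrix n o ℝ) :
    (A ⊗ₖ B).map Complex.ofReal = A.map Complex.ofReal ⊗ₖ B.map Complex.ofReal := by
  ext; simp [kroneckerMap_apply]

theorem PosDef.map_ofReal [Fintype n] {P : Matrix n n ℝ} (hP : P.PosDef) :
    (P.map Complex.ofReal).PosDef := by
  have hherm := hP.isHermitian.map _ fun _ ↦ (Complex.conj_ofReal _).symm
  refine .of_dotProduct_mulVec_pos hherm fun x hx ↦
    Complex.pos_iff.mpr ⟨?_, (hherm.im_star_dotProduct_mulVec_self x).symm⟩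
  set u : n → ℝ := fun i ↦ (x i).re
  set w : n → ℝ := fun i ↦ (x i).im
  have hre : (star x ⬝ᵥ (P.map Complex.ofReal *ᵥ x)).re =
      star u ⬝ᵥ (P *ᵥ u) + star w ⬝ᵥ (P *ᵥ w) := by
    simp [u, w, dotProduct, mulVec, Complex.re_sum, Finset.mul_sum, ← Finset.sum_add_distrib]
  have huw : u ≠ 0 ∨ w ≠ 0 := by
    by_contra! h
    exact hx (funext fun i ↦ Complex.ext (congrFun h.1 i) (congrFun h.2 i))
  rw [hre]
  rcases huw with hu | hw
  · linarith [hP.dotProduct_mulVec_pos hu, hP.posSemidef.dotProduct_mulVec_nonneg w]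
  · linarith [hP.dotProduct_mulVec_pos hw, hP.posSemidef.dotProduct_mulVec_nonneg u]

end Complexification

variable {m p : Type*} [Fintype m] [DecidableEq m] [Fintype p]

theorem re_lt_zero_of_posDef_lyapunov {A P : Matrix m m ℂ} (hP : P.PosDef)
    (hQ : (-(Aᴴ * P + P * A)).PosDef) {μ : ℂ} (hμ : A.charpoly.IsRoot μ) : μ.re < 0 := by
  obtain ⟨v, hv, hAv⟩ := (isRoot_charpoly_iff_exists_mulVec_eq_smul _ _).mp hμ
  set c := star v ⬝ᵥ (P *ᵥ v)
  have hAP : star v ⬝ᵥ ((Aᴴ * P) *ᵥ v) = star μ * c := by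
    rw [← mulVec_mulVec, dotProduct_mulVec, ← star_mulVec, hAv, star_smul, smul_dotProduct,
      smul_eq_mul]
  have hPA : star v ⬝ᵥ ((P * A) *ᵥ v) = μ * c := by
    rw [← mulVec_mulVec, hAv, mulVec_smul, dotProduct_smul, smul_eq_mul]
  have hquad : star v ⬝ᵥ (-(Aᴴ * P + P * A) *ᵥ v) = -((2 * μ.re : ℝ) : ℂ) * c := by
    rw [neg_mulVec, add_mulVec, dotProduct_neg, dotProduct_add, hAP, hPA, ← add_mul,
      Complex.star_def, add_comm, Complex.add_conj, neg_mul]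
  have hc : 0 < c.re := hP.re_dotProduct_pos hv
  have hq := hQ.re_dotProduct_pos hv
  rw [hquad, RCLike.re_to_complex, ← Complex.ofReal_neg, Complex.re_ofReal_mul] at hq
  linarith [(pos_iff_pos_of_mul_pos hq).mpr hc]

theorem posDef_lyapunov_of_riccati {S P : Matrix m m ℂ} {B : Matrix m p ℂ} {K : Matrix p m ℂ}
    {a κ : ℝ} (ha : 0 < a) (hP : P.IsHermitian)
    (hric : Sᴴ * P + P * S - (2 * κ : ℂ) • (P * B * Bᴴ * P) + (a : ℂ) • 1 = 0)
    (hK : K = Bᴴ * P) {lam : ℂ} (hlam : κ ≤ lam.re) :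
    (-((S - lam • (B * K))ᴴ * P + P * (S - lam • (B * K)))).PosDef := by
  have hKK : Kᴴ * K = P * B * Bᴴ * P := by
    simp only [hK, conjTranspose_mul, conjTranspose_conjTranspose, hP.eq, Matrix.mul_assoc]
  have hBKP : (B * K)ᴴ * P = Kᴴ * K := by
    simp only [hK, conjTranspose_mul, conjTranspose_conjTranspose, hP.eq, Matrix.mul_assoc]
  have hPBK : P * (B * K) = Kᴴ * K := by rw [hKK, hK]; simp only [Matrix.mul_assoc]
  have hconj : star lam = ((2 * lam.re : ℝ) : ℂ) - lam := by
    rw [eq_sub_iff_add_eq, add_comm, Complex.star_def, Complex.add_conj]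
  have key : -((S - lam • (B * K))ᴴ * P + P * (S - lam • (B * K))) =
      (a : ℂ) • 1 + ((2 * (lam.re - κ) : ℝ) : ℂ) • (Kᴴ * K) := by
    rw [conjTranspose_sub, conjTranspose_smul, Matrix.sub_mul, Matrix.mul_sub, smul_mul_assoc,
      mul_smul_comm, hBKP, hPBK, hconj]
    rw [← hKK] at hric
    linear_combination (norm := module) -hric
  rw [key]
  exact (PosDef.one.smul (by exact_mod_cast ha)).add_posSemidef
    ((posSemidef_conjTranspose_mul_self K).smul (by exact_mod_cast (by linarith)))

theorem re_lt_zero_of_riccati {S P : Matrix m m ℝ} {B : Matrix m p ℝ} {K : Matrix p m ℝ}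
    {a κ : ℝ} (ha : 0 < a) (hP : P.PosDef)
    (hriccati : Sᵀ * P + P * S - (2 * κ) • (P * B * Bᵀ * P) + a • (1 : Matrix m m ℝ) = 0)
    (hK : K = Bᵀ * P) {lam : ℂ} (hlam : κ ≤ lam.re) {μ : ℂ}
    (hμ : (S.map Complex.ofReal -
      lam • (B.map Complex.ofReal * K.map Complex.ofReal)).charpoly.IsRoot μ) :
    μ.re < 0 := by
  have hric := congrArg (Matrix.map · Complex.ofReal) hriccati
  simp only [Matrix.map_add _ Complex.ofReal_add, Matrix.map_sub _ Complex.ofReal_sub,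
    map_ofReal_mul, map_ofReal_transpose, Matrix.map_smul' _ _ _ Complex.ofReal_mul,
    Complex.ofReal_mul, Complex.ofReal_ofNat,
    Matrix.map_one _ Complex.ofReal_zero Complex.ofReal_one,
    Complex.coe_smul, Matrix.map_zero _ Complex.ofReal_zero] at hric
  have hKc : K.map Complex.ofReal = (B.map Complex.ofReal)ᴴ * P.map Complex.ofReal := by
    rw [hK, map_ofReal_mul, map_ofReal_transpose]
  exact re_lt_zero_of_posDef_lyapunov hP.map_ofReal
    (posDef_lyapunov_of_riccati ha hP.map_ofReal.isHermitian hric hKc hlam) hμ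

end Matrix

theorem riccati_simultaneous_stabilization_general
    (m p N : ℕ)
    (S : Matrix (Fin m) (Fin m) ℝ) (B : Matrix (Fin m) (Fin p) ℝ)
    (a κ : ℝ) (ha : 0 < a)
    (P : Matrix (Fin m) (Fin m) ℝ) (hP : P.PosDef)
    (hriccati : Sᵀ * P + P * S - (2 * κ) • (P * B * Bᵀ * P)
        + a • (1 : Matrix (Fin m) (Fin m) ℝ) = 0)
    (H : Matrix (Fin N) (Fin N) ℝ)
    (hH : ∀ lam : ℂ, (H.map Complex.ofReal).charpoly.IsRoot lam → κ ≤ lam.re)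
    (K : Matrix (Fin p) (Fin m) ℝ) (hK : K = Bᵀ * P) :
    IsHurwitzR ((1 : Matrix (Fin N) (Fin N) ℝ) ⊗ₖ S - H ⊗ₖ (B * K)) := by
  intro μ hμ
  have hmap : ((1 : Matrix (Fin N) (Fin N) ℝ) ⊗ₖ S - H ⊗ₖ (B * K)).map Complex.ofReal =
      1 ⊗ₖ S.map Complex.ofReal -
        H.map Complex.ofReal ⊗ₖ (B.map Complex.ofReal * K.map Complex.ofReal) := by
    simp [Matrix.map_sub _ Complex.ofReal_sub,
      Matrix.map_one _ Complex.ofReal_zero Complex.ofReal_one]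
  rw [hmap] at hμ
  obtain ⟨lam, hlam, hroot⟩ :=
    exists_isRoot_charpoly_of_isRoot_charpoly_one_kronecker_sub_kronecker _ _ _ hμ
  exact re_lt_zero_of_riccati ha hP hriccati hK (hH lam hlam) hroot

/-- simultaneous stabilization via the algebraic Riccati equation:
`I_N ⊗ S − H ⊗ (BK)` is Hurwitz. -/
theorem riccati_simultaneous_stabilization
    (m p N : ℕ)
    (S : Matrix (Fin m) (Fin m) ℝ) (B : Matrix (Fin m) (Fin p) ℝ)
    (a κ : ℝ) (ha : 0 < a) (hκ : 0 < κ)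
    (P : Matrix (Fin m) (Fin m) ℝ) (hP : P.PosDef)
    (hriccati : Sᵀ * P + P * S - (2 * κ) • (P * B * Bᵀ * P)
        + a • (1 : Matrix (Fin m) (Fin m) ℝ) = 0)
    (H : Matrix (Fin N) (Fin N) ℝ)
    (hH : ∀ lam : ℂ, (H.map Complex.ofReal).charpoly.IsRoot lam → κ ≤ lam.re)
    (K : Matrix (Fin p) (Fin m) ℝ) (hK : K = Bᵀ * P) :
    IsHurwitzR ((1 : Matrix (Fin N) (Fin N) ℝ) ⊗ₖ S - H ⊗ₖ (B * K)) :=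
  riccati_simultaneous_stabilization_general m p N S B a κ ha P hP hriccati H hH K hK
end

section
/- Let S, M ∈ ℂ^{m×m} and H ∈ ℂ^{N×N}. Then the set of eigenvalues of I_N ⊗ S − H ⊗ M equals the union, over all eigenvalues λ of H, of the sets of eigenvalues of S − λM. -/
/-!
Identifying vectors indexed by `Fin N × Fin m` with `m × N` matrices through `Matrix.vec`,
`μ` is an eigenvalue of `1 ⊗ S - H ⊗ M` iff `S X - M X Hᵀ = μ X` for some `X ≠ 0`.
If `H v = λ v` and `(S - λ M) w = μ w`, the rank-one matrix `X = w vᵀ` is such a solution.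
Conversely, if `μ` is an eigenvalue of no `S - λ M`, then `X` vanishes on every generalized
eigenspace of `Hᵀ`: whenever `X (Hᵀ - λ) u = 0`, `X u` is a `μ`-eigenvector of `S - λ M`,
hence zero. Over `ℂ` these generalized eigenspaces span everything, so `X = 0`.
-/

open Matrix
open scoped Kronecker

theorem Matrix.isRoot_charpoly_iff_exists_mulVec_eq_smul_s10 {K n : Type*} [Field K] [Fintype n]
    [DecidableEq n] (A : Matrix n n K) (μ : K) :
    A.charpoly.IsRoot μ ↔ ∃ v ≠ 0, A *ᵥ v = μ • v := by
  rw [← charpoly_toLin', ← Module.End.hasEigenvalue_iff_isRoot_charpoly]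
  constructor
  · intro h
    obtain ⟨v, hv, hv0⟩ := h.exists_hasEigenvector
    exact ⟨v, hv0, by simpa using Module.End.mem_eigenspace_iff.1 hv⟩
  · rintro ⟨v, hv0, hv⟩
    exact Module.End.hasEigenvalue_of_hasEigenvector
      ⟨Module.End.mem_eigenspace_iff.2 (by simpa using hv), hv0⟩

theorem LinearMap.eq_zero_of_forall_hasEigenvalue {K V W : Type*} [Field K] [IsAlgClosed K]
    [AddCommGroup V] [Module K V] [FiniteDimensional K V] [AddCommGroup W] [Module K W]
    (f : Module.End K V) (g : V →ₗ[K] W)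
    (h : ∀ a, f.HasEigenvalue a → ∀ v, g (f v) = a • g v → g v = 0) : g = 0 := by
  suffices hle : ∀ a, f.maxGenEigenspace a ≤ LinearMap.ker g by
    rw [← LinearMap.ker_eq_top, eq_top_iff, ← Module.End.iSup_maxGenEigenspace_eq_top f]
    exact iSup_le hle
  intro a
  by_cases ha : f.HasEigenvalue a
  · intro v hv
    obtain ⟨k, hk⟩ := (f.mem_maxGenEigenspace a v).1 hv
    clear hv
    induction k generalizing v with
    | zero => simp_all
    | succ k ih =>
      rw [pow_succ, Module.End.mul_apply] at hk
      have hfv : g ((f - a • 1) v) = 0 := ih hk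
      simp only [LinearMap.sub_apply, LinearMap.smul_apply, Module.End.one_apply, map_sub,
        map_smul, sub_eq_zero] at hfv
      exact h a ha v hfv
  · have hbot : f.maxGenEigenspace a = ⊥ := by
      simpa [Module.End.HasUnifEigenvalue] using
        mt (Module.End.hasUnifEigenvalue_iff_hasUnifEigenvalue_one (k := ⊤) (by simp)).1 ha
    simp [hbot]

section
variable {K m n : Type*} [Field K] [Fintype m] [Fintype n] [DecidableEq m] [DecidableEq n]

theorem Matrix.eq_zero_of_mul_sub_mul_mul_eq_smul [IsAlgClosed K] {S M : Matrix m m K}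
    {G : Matrix n n K} {X : Matrix m n K} {μ : K} (hX : S * X - M * X * G = μ • X)
    (hG : ∀ a, G.charpoly.IsRoot a → ¬ (S - a • M).charpoly.IsRoot μ) : X = 0 := by
  suffices toLin' X = 0 by simpa using this
  refine LinearMap.eq_zero_of_forall_hasEigenvalue (toLin' G) (toLin' X) fun a ha u hu => ?_
  rw [Module.End.hasEigenvalue_iff_isRoot_charpoly, charpoly_toLin'] at ha
  rw [toLin'_apply, toLin'_apply, toLin'_apply] at hu
  by_contra hne
  refine hG a ha <|
    (isRoot_charpoly_iff_exists_mulVec_eq_smul_s10 _ _).2 ⟨X *ᵥ u, by simpa using hne, ?_⟩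
  calc (S - a • M) *ᵥ X *ᵥ u = S *ᵥ X *ᵥ u - M *ᵥ X *ᵥ G *ᵥ u := by
        rw [sub_mulVec, smul_mulVec, ← mulVec_smul, ← hu]
    _ = (S * X - M * X * G) *ᵥ u := by simp only [sub_mulVec, mulVec_mulVec, Matrix.mul_assoc]
    _ = μ • X *ᵥ u := by rw [hX, smul_mulVec]

theorem Matrix.isRoot_charpoly_one_kronecker_sub_kronecker_iff (S M : Matrix m m K)
    (H : Matrix n n K) (μ : K) :
    (1 ⊗ₖ S - H ⊗ₖ M).charpoly.IsRoot μ ↔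
      ∃ X : Matrix m n K, X ≠ 0 ∧ S * X - M * X * Hᵀ = μ • X := by
  have hvec (X : Matrix m n K) :
      (1 ⊗ₖ S - H ⊗ₖ M) *ᵥ vec X = vec (S * X - M * X * Hᵀ) := by
    rw [sub_mulVec, kronecker_mulVec_vec, kronecker_mulVec_vec, transpose_one, Matrix.mul_one,
      vec_sub]
  rw [isRoot_charpoly_iff_exists_mulVec_eq_smul_s10]
  constructor
  · rintro ⟨x, hx0, hx⟩
    obtain ⟨X, rfl⟩ := vec_bijective.surjective x
    exact ⟨X, by rintro rfl; simp at hx0, vec_inj.1 (by rw [← hvec, hx, vec_smul])⟩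
  · rintro ⟨X, hX0, hX⟩
    exact ⟨vec X, by rwa [Ne, vec_eq_zero_iff], by rw [hvec, hX, vec_smul]⟩

theorem Matrix.exists_ne_zero_mul_sub_mul_mul_transpose_eq_smul {S M : Matrix m m K}
    {H : Matrix n n K} {a μ : K} (ha : H.charpoly.IsRoot a)
    (hμ : (S - a • M).charpoly.IsRoot μ) :
    ∃ X : Matrix m n K, X ≠ 0 ∧ S * X - M * X * Hᵀ = μ • X := by
  obtain ⟨v, hv0, hv⟩ := (isRoot_charpoly_iff_exists_mulVec_eq_smul_s10 H a).1 ha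
  obtain ⟨w, hw0, hw⟩ := (isRoot_charpoly_iff_exists_mulVec_eq_smul_s10 _ μ).1 hμ
  obtain ⟨i, hi⟩ := Function.ne_iff.1 hw0
  obtain ⟨j, hj⟩ := Function.ne_iff.1 hv0
  refine ⟨vecMulVec w v, fun h => mul_ne_zero hi hj (congrFun₂ h i j), ?_⟩
  rw [mul_vecMulVec, mul_vecMulVec, vecMulVec_mul, vecMul_transpose, hv, vecMulVec_smul,
    ← smul_vecMulVec, ← sub_vecMulVec, ← smul_mulVec, ← sub_mulVec, hw, smul_vecMulVec]

end

/-- the spectrum of `I_N ⊗ S − H ⊗ M` is the union over the eigenvalues `λ` of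
`H` of the spectra of `S − λM`. -/
theorem eigenvalues_kronecker_shift
    (m N : ℕ) (S M : Matrix (Fin m) (Fin m) ℂ) (H : Matrix (Fin N) (Fin N) ℂ) :
    {μ : ℂ | ((1 : Matrix (Fin N) (Fin N) ℂ) ⊗ₖ S - H ⊗ₖ M).charpoly.IsRoot μ}
      = ⋃ lam ∈ {lam : ℂ | H.charpoly.IsRoot lam},
          {μ : ℂ | (S - lam • M).charpoly.IsRoot μ} := by
  ext μ
  simp only [Set.mem_ofPred_eq, Set.mem_iUnion, exists_prop,
    isRoot_charpoly_one_kronecker_sub_kronecker_iff]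
  constructor
  · rintro ⟨X, hX0, hX⟩
    by_contra! h
    exact hX0 (eq_zero_of_mul_sub_mul_mul_eq_smul hX (by simpa only [charpoly_transpose] using h))
  · rintro ⟨a, ha, hμ⟩
    exact exists_ne_zero_mul_sub_mul_mul_transpose_eq_smul ha hμ
end

section
/- Let F ∈ ℂ^{m×m} be Hurwitz and let α ∈ ℝ satisfy Re λ < α < 0 for every eigenvalue λ of F. Then there exists M ≥ 1 such that ‖exp(tF)‖ ≤ M·e^{αt} for all t ≥ 0, where exp denotes the matrix exponential and ‖·‖ the operator norm. -/
open Matrix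
open scoped Matrix.Norms.L2Operator

/-- A complex square matrix is Hurwitz if every eigenvalue (root of its characteristic
polynomial) has negative real part. -/
def IsHurwitzC {n : Type*} [Fintype n] [DecidableEq n] (M : Matrix n n ℂ) : Prop :=
  ∀ μ : ℂ, M.charpoly.IsRoot μ → μ.re < 0

/-!
Write `F = G + α`. Then `exp (t • F) = e^{α t} • exp (t • G)` and every eigenvalue of `G` has
negative real part, so it suffices to bound `exp (t • G)` for `t ≥ 0`. For matrices `exp G` is a
polynomial in `G`, and an eigenvector of `G` for `w` is one of `exp G` for `exp w`; hence the
spectrum of `exp G` lies in `exp` of that of `G`, inside the open unit disc. Gelfand's formula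
then bounds the powers `exp G ^ n = exp (n • G)`, and compactness of `[0, 1]` takes care of the
fractional part of `t`.
-/

open NormedSpace Polynomial Filter

section EigenEquation

variable {R A : Type*} [CommSemiring R] [Semiring A] [Algebra R A] {a p : A} {z : R}

theorem pow_mul_eq_smul_of_mul_eq_smul (h : a * p = z • p) (n : ℕ) : a ^ n * p = z ^ n • p := by
  induction n with
  | zero => simp
  | succ n ih => rw [pow_succ, mul_assoc, h, mul_smul_comm, ih, smul_smul, pow_succ']

theorem aeval_mul_eq_smul_of_mul_eq_smul (h : a * p = z • p) (q : R[X]) :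
    aeval a q * p = q.eval z • p := by
  induction q using Polynomial.induction_on' with
  | add q r hq hr => rw [map_add, add_mul, hq, hr, eval_add, add_smul]
  | monomial n c =>
    rw [aeval_monomial, eval_monomial, Algebra.algebraMap_eq_smul_one, smul_one_mul,
      smul_mul_assoc, pow_mul_eq_smul_of_mul_eq_smul h, smul_smul]

end EigenEquation

section BanachAlgebra

variable {𝕜 A : Type*} [RCLike 𝕜] [NormedRing A] [NormedAlgebra 𝕜 A]

theorem exp_mul_eq_smul_of_mul_eq_smul [CompleteSpace A] {a p : A} {z : 𝕜} (h : a * p = z • p) :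
    exp a * p = exp z • p := by
  have hA := (exp_series_hasSum_exp' (𝕂 := 𝕜) a).mul_right p
  have h𝕜 := (exp_series_hasSum_exp' (𝕂 := 𝕜) z).smul_const p
  simp only [smul_mul_assoc, pow_mul_eq_smul_of_mul_eq_smul h, smul_smul] at hA
  exact hA.unique h𝕜

theorem exp_mem_adjoin_singleton [FiniteDimensional 𝕜 A] (a : A) :
    exp a ∈ Algebra.adjoin 𝕜 {a} := by
  let +nondep : NormedAlgebra ℚ A := .restrictScalars ℚ 𝕜 A
  exact exp_mem (s := Algebra.adjoin 𝕜 {a})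
    (Submodule.closed_of_finiteDimensional (Algebra.adjoin 𝕜 {a}).toSubmodule)
    (Algebra.self_mem_adjoin_singleton 𝕜 a)

theorem exp_add_algebraMap [CompleteSpace A] (a : A) (c : 𝕜) :
    exp (a + algebraMap 𝕜 A c) = exp c • exp a := by
  let +nondep : NormedAlgebra ℚ A := .restrictScalars ℚ 𝕜 A
  rw [NormedSpace.exp_add_of_commute (Algebra.commutes c a).symm, ← algebraMap_exp_comm,
    ← Algebra.commutes, Algebra.smul_def]

end BanachAlgebra

section PowerBound

variable {A : Type*} [NormedRing A] [NormedAlgebra ℂ A] [CompleteSpace A]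

theorem exists_norm_pow_le_of_spectralRadius_lt_one {a : A} (ha : spectralRadius ℂ a < 1) :
    ∃ C, ∀ n : ℕ, ‖a ^ n‖ ≤ C := by
  have hgelfand := spectrum.pow_nnnorm_pow_one_div_tendsto_nhds_spectralRadius a
  have hle : ∀ᶠ n : ℕ in atTop, ‖a ^ n‖ ≤ 1 := by
    filter_upwards [hgelfand.eventually_lt_const ha, eventually_gt_atTop 0] with n hn hn0
    rw [one_div, ENNReal.rpow_inv_lt_iff (by positivity), ENNReal.one_rpow] at hn
    exact_mod_cast hn.le
  obtain ⟨C, hC⟩ := (isBoundedUnder_of_eventually_le hle).bddAbove_range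
  exact ⟨C, fun n => hC (Set.mem_range_self n)⟩

end PowerBound

section Semigroup

variable {A : Type*} [NormedRing A] [NormedAlgebra ℝ A] [CompleteSpace A]

theorem exists_norm_exp_smul_le_of_norm_pow_le {a : A} {C : ℝ} (h : ∀ n : ℕ, ‖exp a ^ n‖ ≤ C) :
    ∃ K, ∀ t : ℝ, 0 ≤ t → ‖exp (t • a)‖ ≤ K := by
  let +nondep : NormedAlgebra ℚ A := .restrictScalars ℚ ℝ A
  obtain ⟨K, hK⟩ := (isCompact_Icc (a := (0 : ℝ)) (b := 1)).exists_bound_of_continuousOn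
    (differentiable_exp_smul_const ℝ a).continuous.continuousOn
  refine ⟨C * K, fun t ht => ?_⟩
  set n := ⌊t⌋₊
  have hs : t - n ∈ Set.Icc (0 : ℝ) 1 :=
    ⟨sub_nonneg.2 (Nat.floor_le ht), by linarith [Nat.lt_floor_add_one t]⟩
  have hsplit : exp (t • a) = exp a ^ n * exp ((t - n) • a) := by
    rw [← NormedSpace.exp_nsmul, ← Nat.cast_smul_eq_nsmul ℝ,
      ← NormedSpace.exp_add_of_commute (((Commute.refl a).smul_left _).smul_right _), ← add_smul,
      add_sub_cancel]
  calc ‖exp (t • a)‖ ≤ ‖exp a ^ n‖ * ‖exp ((t - n) • a)‖ := hsplit ▸ norm_mul_le _ _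
    _ ≤ C * K := mul_le_mul (h n) (hK _ hs) (norm_nonneg _) ((norm_nonneg _).trans (h 0))

end Semigroup

namespace Matrix

variable {n : Type*} [Fintype n] [DecidableEq n]

theorem exists_mul_eq_smul_of_mem_spectrum {K : Type*} [Field K] {A : Matrix n n K} {z : K}
    (hz : z ∈ spectrum K A) : ∃ P : Matrix n n K, P ≠ 0 ∧ A * P = z • P := by
  rw [spectrum.mem_iff, isUnit_iff_isUnit_det, isUnit_iff_ne_zero, not_not,
    ← exists_mulVec_eq_zero_iff] at hz
  obtain ⟨v, hv, hzv⟩ := hz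
  have hAv : A *ᵥ v = z • v := by
    rw [sub_mulVec, Algebra.algebraMap_eq_smul_one, smul_mulVec, one_mulVec, sub_eq_zero] at hzv
    exact hzv.symm
  exact ⟨vecMulVec v v, vecMulVec_ne_zero hv hv, by rw [mul_vecMulVec, hAv, smul_vecMulVec]⟩

theorem spectrum_exp_subset (A : Matrix n n ℂ) :
    spectrum ℂ (exp A) ⊆ Complex.exp '' spectrum ℂ A := by
  rcases subsingleton_or_nontrivial (Matrix n n ℂ) with _ | _
  · simp [spectrum.of_subsingleton]
  obtain ⟨q, hq⟩ : ∃ q : ℂ[X], aeval A q = exp A := by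
    simpa [Algebra.adjoin_singleton_eq_range_aeval] using exp_mem_adjoin_singleton (𝕜 := ℂ) A
  rw [← hq, spectrum.map_polynomial_aeval_of_nonempty A q (spectrum.nonempty A)]
  rintro _ ⟨w, hw, rfl⟩
  refine ⟨w, hw, ?_⟩
  obtain ⟨P, hP, hAP⟩ := exists_mul_eq_smul_of_mem_spectrum hw
  have hsmul : exp w • P = q.eval w • P :=
    (exp_mul_eq_smul_of_mul_eq_smul hAP).symm.trans (hq ▸ aeval_mul_eq_smul_of_mul_eq_smul hAP q)
  rw [Complex.exp_eq_exp_ℂ]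
  exact smul_left_injective ℂ hP hsmul

theorem spectralRadius_exp_lt_one {A : Matrix n n ℂ} (hA : ∀ z ∈ spectrum ℂ A, z.re < 0) :
    spectralRadius ℂ (exp A) < 1 := by
  rcases (spectrum ℂ (exp A)).eq_empty_or_nonempty with h | h
  · simp [spectralRadius, h]
  refine spectrum.spectralRadius_lt_of_forall_lt_of_nonempty h fun z hz => ?_
  obtain ⟨w, hw, rfl⟩ := spectrum_exp_subset A hz
  rw [← NNReal.coe_lt_coe, coe_nnnorm, Complex.norm_exp, NNReal.coe_one, Real.exp_lt_one_iff]
  exact hA w hw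

theorem exists_norm_exp_smul_le_of_re_lt_zero {A : Matrix n n ℂ}
    (hA : ∀ z ∈ spectrum ℂ A, z.re < 0) : ∃ K, ∀ t : ℝ, 0 ≤ t → ‖exp (t • A)‖ ≤ K := by
  obtain ⟨_, hC⟩ : ∃ C, ∀ k : ℕ, ‖exp A ^ k‖ ≤ C :=
    exists_norm_pow_le_of_spectralRadius_lt_one (spectralRadius_exp_lt_one hA)
  exact exists_norm_exp_smul_le_of_norm_pow_le hC

end Matrix

theorem matrix_exp_decay_general
    (m : ℕ) (F : Matrix (Fin m) (Fin m) ℂ)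
    (α : ℝ)
    (hspec : ∀ μ : ℂ, F.charpoly.IsRoot μ → μ.re < α) :
    ∃ M : ℝ, 1 ≤ M ∧ ∀ t : ℝ, 0 ≤ t →
      ‖NormedSpace.exp (t • F)‖ ≤ M * Real.exp (α * t) := by
  have hshift : ∀ z ∈ spectrum ℂ (F - algebraMap ℝ _ α), z.re < 0 := by
    intro z hz
    rw [IsScalarTower.algebraMap_apply ℝ ℂ, ← spectrum.sub_singleton_eq] at hz
    obtain ⟨μ, hμ, _, rfl, rfl⟩ := hz
    simpa using hspec μ (mem_spectrum_iff_isRoot_charpoly.1 hμ)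
  obtain ⟨K, hK⟩ := exists_norm_exp_smul_le_of_re_lt_zero hshift
  refine ⟨max 1 K, le_max_left _ _, fun t ht => ?_⟩
  have hsplit : t • F = t • (F - algebraMap ℝ _ α) + algebraMap ℝ _ (α * t) := by
    rw [smul_sub, Algebra.algebraMap_eq_smul_one, Algebra.algebraMap_eq_smul_one, smul_smul,
      mul_comm, sub_add_cancel]
  calc ‖exp (t • F)‖ = Real.exp (α * t) * ‖exp (t • (F - algebraMap ℝ _ α))‖ := by
        rw [hsplit, exp_add_algebraMap, norm_smul, ← Real.exp_eq_exp_ℝ,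
          Real.norm_of_nonneg (Real.exp_pos _).le]
    _ ≤ max 1 K * Real.exp (α * t) := by
        rw [mul_comm]
        exact mul_le_mul_of_nonneg_right ((hK t ht).trans (le_max_right _ _)) (Real.exp_pos _).le

/-- exponential decay of the matrix exponential of a Hurwitz matrix, with rate
`α` strictly dominating the spectrum. -/
theorem matrix_exp_decay
    (m : ℕ) (F : Matrix (Fin m) (Fin m) ℂ) (hF : IsHurwitzC F)
    (α : ℝ) (hα_neg : α < 0)
    (hspec : ∀ μ : ℂ, F.charpoly.IsRoot μ → μ.re < α) :
    ∃ M : ℝ, 1 ≤ M ∧ ∀ t : ℝ, 0 ≤ t →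
      ‖NormedSpace.exp (t • F)‖ ≤ M * Real.exp (α * t) :=
  matrix_exp_decay_general m F α hspec
end

section
/- Let λ : [0,1] → ℝ be continuous with λ(z) > 0 for all z ∈ [0,1], and define φ(z) = ∫_z^1 dη/λ(η). Suppose u : [0,1] × [0,∞) → ℝ is continuously differentiable and satisfies the transport equation ∂_t u(z,t) = λ(z)·∂_z u(z,t) for all (z,t) ∈ [0,1] × (0,∞) together with the boundary condition u(1,t) = 0 for all t ≥ 0. Then u(z,t) = 0 for all z ∈ [0,1] and all t ≥ φ(z); in particular u(·,t) vanishes identically for all t ≥ φ(0), i.e., the transport equation is finite-time stable with settling time ∫₀¹ dη/λ(η). -/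
/-! Along a characteristic `y ↦ (y, c + φ y)` the slope `φ' = -1/λ` cancels the transport term,
so `u` is constant there by the chain rule. Since `φ` decreases from `φ z` to `φ 1 = 0`, the
characteristic through `(z, t)` with `t ≥ φ z` stays in `t ≥ 0` and ends at `(1, t - φ z)`, where
the boundary condition gives `u = 0`. -/

open Set

theorem DifferentiableWithinAt.hasDerivWithinAt_comp_graph {u : ℝ → ℝ → ℝ} {A B C : Set ℝ}
    {x : ℝ} {γ : ℝ → ℝ} {γ' : ℝ}
    (hu : DifferentiableWithinAt ℝ (fun p : ℝ × ℝ => u p.1 p.2) (A ×ˢ B) (x, γ x))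
    (hA : UniqueDiffWithinAt ℝ A x) (hB : UniqueDiffWithinAt ℝ B (γ x))
    (hx : x ∈ A) (hγx : γ x ∈ B)
    (hγ : HasDerivWithinAt γ γ' C x) (hmaps : MapsTo (fun y => (y, γ y)) C (A ×ˢ B)) :
    HasDerivWithinAt (fun y => u y (γ y))
      (derivWithin (fun y => u y (γ x)) A x + γ' * derivWithin (u x) B (γ x)) C x := by
  set L := fderivWithin ℝ (fun p : ℝ × ℝ => u p.1 p.2) (A ×ˢ B) (x, γ x)
  have hL : HasFDerivWithinAt (fun p : ℝ × ℝ => u p.1 p.2) L (A ×ˢ B) (x, γ x) :=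
    hu.hasFDerivWithinAt
  have hdz : HasDerivWithinAt (fun y => u y (γ x)) (L (1, 0)) A x := by
    have := (hasDerivWithinAt_id x A).prodMk (hasDerivWithinAt_const x A (γ x))
    exact hL.comp_hasDerivWithinAt x this fun y hy => mk_mem_prod hy hγx
  have hdt : HasDerivWithinAt (u x) (L (0, 1)) B (γ x) := by
    have := (hasDerivWithinAt_const (γ x) B x).prodMk (hasDerivWithinAt_id (γ x) B)
    exact hL.comp_hasDerivWithinAt (γ x) this fun s hs => mk_mem_prod hx hs
  have hsplit : ((1 : ℝ), γ') = ((1 : ℝ), (0 : ℝ)) + γ' • ((0 : ℝ), (1 : ℝ)) := by simp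
  have := hL.comp_hasDerivWithinAt x ((hasDerivWithinAt_id x C).prodMk hγ) hmaps
  rwa [hsplit, map_add, map_smul, ← hdz.derivWithin hA, ← hdt.derivWithin hB, smul_eq_mul] at this

theorem hasDerivWithinAt_integral_Icc_left {a b x : ℝ} {f : ℝ → ℝ}
    (hf : ContinuousOn f (Icc a b)) (hx : x ∈ Icc a b) :
    HasDerivWithinAt (fun y => ∫ η in y..b, f η) (-f x) (Icc a b) x := by
  -- enables the `FTCFilter` instance for `𝓝[Icc a b] x`
  have : Fact (x ∈ Icc a b) := ⟨hx⟩
  exact intervalIntegral.integral_hasDerivWithinAt_left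
    ((hf.mono (uIcc_subset_Icc hx (right_mem_Icc.2 (hx.1.trans hx.2)))).intervalIntegrable)
    (hf.stronglyMeasurableAtFilter_nhdsWithin measurableSet_Icc x) (hf x hx)

theorem strictAntiOn_Icc_of_hasDerivWithinAt_neg {a b : ℝ} {f f' : ℝ → ℝ}
    (hf : ∀ x ∈ Icc a b, HasDerivWithinAt f (f' x) (Icc a b) x)
    (hf' : ∀ x ∈ Ioo a b, f' x < 0) : StrictAntiOn f (Icc a b) := by
  refine strictAntiOn_of_hasDerivWithinAt_neg (f' := f') (convex_Icc a b)
    (fun x hx => (hf x hx).continuousWithinAt) (fun x hx => ?_) (fun x hx => ?_)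
  · rw [interior_Icc] at hx ⊢
    exact (hf x (Ioo_subset_Icc_self hx)).mono Ioo_subset_Icc_self
  · rw [interior_Icc] at hx
    exact hf' x hx

section Transport

variable {a b : ℝ} {lam φ : ℝ → ℝ} {u : ℝ → ℝ → ℝ}

theorem hasDerivWithinAt_characteristic_eq_zero (hab : a < b)
    (hu : DifferentiableOn ℝ (fun p : ℝ × ℝ => u p.1 p.2) (Icc a b ×ˢ Ici 0))
    (hpde : ∀ z ∈ Icc a b, ∀ t ∈ Ioi (0 : ℝ),
      derivWithin (fun s => u z s) (Ici 0) t = lam z * derivWithin (fun y => u y t) (Icc a b) z)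
    (hφ : ∀ z ∈ Icc a b, HasDerivWithinAt φ (-(lam z)⁻¹) (Icc a b) z)
    {c x : ℝ} (hx : x ∈ Icc a b) (hlam : lam x ≠ 0) (hc : ∀ y ∈ Icc x b, 0 ≤ c + φ y)
    (hcx : 0 < c + φ x) :
    HasDerivWithinAt (fun y => u y (c + φ y)) 0 (Icc x b) x := by
  have hγ : HasDerivWithinAt (fun y => c + φ y) (-(lam x)⁻¹) (Icc x b) x :=
    ((hφ x hx).mono (Icc_subset_Icc_left hx.1)).const_add c
  have hmaps : MapsTo (fun y => (y, c + φ y)) (Icc x b) (Icc a b ×ˢ Ici 0) :=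
    fun y hy => mk_mem_prod ⟨hx.1.trans hy.1, hy.2⟩ (hc y hy)
  have hux : DifferentiableWithinAt ℝ (fun p : ℝ × ℝ => u p.1 p.2) (Icc a b ×ˢ Ici 0)
      (x, c + φ x) := hu _ (hmaps ⟨le_rfl, hx.2⟩)
  have := hux.hasDerivWithinAt_comp_graph
    (uniqueDiffOn_Icc hab x hx) (uniqueDiffOn_Ici 0 _ hcx.le) hx hcx.le hγ hmaps
  rwa [hpde x hx _ hcx, ← mul_assoc, neg_mul, inv_mul_cancel₀ hlam, neg_one_mul,
    add_neg_cancel] at this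

theorem transport_solution_eq_zero_of_le (hab : a < b) (hlam : ∀ z ∈ Icc a b, 0 < lam z)
    (hφ : ∀ z ∈ Icc a b, HasDerivWithinAt φ (-(lam z)⁻¹) (Icc a b) z) (hφb : φ b = 0)
    (hu : DifferentiableOn ℝ (fun p : ℝ × ℝ => u p.1 p.2) (Icc a b ×ˢ Ici 0))
    (hpde : ∀ z ∈ Icc a b, ∀ t ∈ Ioi (0 : ℝ),
      derivWithin (fun s => u z s) (Ici 0) t = lam z * derivWithin (fun y => u y t) (Icc a b) z)
    (hbc : ∀ t : ℝ, 0 ≤ t → u b t = 0) {z t : ℝ} (hz : z ∈ Icc a b) (ht : φ z ≤ t) :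
    u z t = 0 := by
  have hb : b ∈ Icc a b := right_mem_Icc.2 hab.le
  have hanti := strictAntiOn_Icc_of_hasDerivWithinAt_neg hφ fun x hx =>
    neg_neg_of_pos (inv_pos.2 (hlam x (Ioo_subset_Icc_self hx)))
  set c := t - φ z
  have hc : 0 ≤ c := sub_nonneg.2 ht
  have hzb : Icc z b ⊆ Icc a b := Icc_subset_Icc_left hz.1
  have hmaps : MapsTo (fun y => (y, c + φ y)) (Icc z b) (Icc a b ×ˢ Ici 0) :=
    fun y hy => mk_mem_prod (hzb hy)
      (add_nonneg hc (hφb ▸ hanti.antitoneOn (hzb hy) hb hy.2))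
  have hcont : ContinuousOn (fun y => u y (c + φ y)) (Icc z b) :=
    hu.continuousOn.comp (continuousOn_id.prodMk (continuousOn_const.add
      fun y hy => ((hφ y (hzb hy)).continuousWithinAt).mono hzb)) hmaps
  have hderiv : ∀ x ∈ Ico z b, HasDerivWithinAt (fun y => u y (c + φ y)) 0 (Ici x) x := by
    intro x hx
    have hx' : x ∈ Icc a b := hzb (Ico_subset_Icc_self hx)
    have hcx : 0 < c + φ x := add_pos_of_nonneg_of_pos hc (hφb ▸ hanti hx' hb hx.2)
    exact (hasDerivWithinAt_characteristic_eq_zero hab hu hpde hφ hx' (hlam x hx').ne'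
      (fun y hy => (hmaps ⟨hx.1.trans hy.1, hy.2⟩).2) hcx).mono_of_mem_nhdsWithin
      (Icc_mem_nhdsGE hx.2)
  have hconst := constant_of_has_deriv_right_zero hcont hderiv b (right_mem_Icc.2 hz.2)
  simpa [c, hφb, hbc c hc] using hconst.symm

end Transport

/-- finite-time stability of the scalar transport equation
`∂_t u = λ(z) ∂_z u` with boundary condition `u(1,t) = 0`: the solution vanishes at `(z,t)`
as soon as `t ≥ φ(z) = ∫_z^1 dη/λ(η)`; in particular `u(·,t) ≡ 0` for `t ≥ φ(0) = ∫₀¹ dη/λ(η)`,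
i.e. the settling time is `∫₀¹ dη/λ(η)`. -/
theorem transport_equation_finite_time_stable
    (lam : ℝ → ℝ)
    (hlam_cont : ContinuousOn lam (Icc 0 1))
    (hlam_pos : ∀ z ∈ Icc (0 : ℝ) 1, 0 < lam z)
    (φ : ℝ → ℝ)
    (hφ : ∀ z, φ z = ∫ η in z..1, (lam η)⁻¹)
    (u : ℝ → ℝ → ℝ)
    (hu_C1 : ContDiffOn ℝ 1 (fun p : ℝ × ℝ => u p.1 p.2) (Icc 0 1 ×ˢ Ici 0))
    (hpde : ∀ z ∈ Icc (0 : ℝ) 1, ∀ t ∈ Ioi (0 : ℝ),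
      derivWithin (fun s => u z s) (Ici 0) t
        = lam z * derivWithin (fun y => u y t) (Icc 0 1) z)
    (hbc : ∀ t : ℝ, 0 ≤ t → u 1 t = 0) :
    (∀ z ∈ Icc (0 : ℝ) 1, ∀ t : ℝ, φ z ≤ t → u z t = 0) ∧
    (∀ t : ℝ, φ 0 ≤ t → ∀ z ∈ Icc (0 : ℝ) 1, u z t = 0) := by
  have hinv : ContinuousOn (fun η => (lam η)⁻¹) (Icc 0 1) :=
    hlam_cont.inv₀ fun η hη => (hlam_pos η hη).ne'
  have hφ' : ∀ z ∈ Icc (0 : ℝ) 1, HasDerivWithinAt φ (-(lam z)⁻¹) (Icc 0 1) z :=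
    fun z hz => (funext hφ : φ = _) ▸ hasDerivWithinAt_integral_Icc_left hinv hz
  have hφ1 : φ 1 = 0 := by rw [hφ, intervalIntegral.integral_same]
  have key : ∀ z ∈ Icc (0 : ℝ) 1, ∀ t : ℝ, φ z ≤ t → u z t = 0 :=
    fun z hz t ht => transport_solution_eq_zero_of_le one_pos hlam_pos hφ' hφ1
      (hu_C1.differentiableOn one_ne_zero) hpde hbc hz ht
  have hanti := strictAntiOn_Icc_of_hasDerivWithinAt_neg hφ' fun x hx =>
    neg_neg_of_pos (inv_pos.2 (hlam_pos x (Ioo_subset_Icc_self hx)))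
  exact ⟨key, fun t ht z hz =>
    key z hz t ((hanti.antitoneOn (left_mem_Icc.2 zero_le_one) hz hz.1).trans ht)⟩
end
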